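/- arXiv:math/0607715 — 7 statements merged into one kernel-verified Lean document; each statement's English description precedes it below -/
import Mathlib

section
/- Let n be a positive integer, let w ∈ ℝⁿ have all positive components, and let z be a real number. Then the n-dimensional volume of the sliced unit cube G_{w,z}ⁿ ∩ Iⁿ equals the alternating sum over all subsets K of [n] of (-1)^{|K|} times the n-dimensional volume of the simplex Δ_{w,z}^K; that is, vol_n(G_{w,z}ⁿ ∩ Iⁿ) = Σ_{K ⊆ [n]} (-1)^{|K|} vol_n(Δ_{w,z}^K). -/
open MeasureTheory Finset

/-!
Coordinatewise, the indicator of `[a, b)` is `1[x ≥ a] - 1[x ≥ b]`; expanding the product of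
these differences writes the indicator of a half-open box as the alternating sum of the indicators
of the orthants `Ici (K.piecewise b a)`. Multiplying by the indicator of the halfspace and
integrating gives the identity: positivity of `w` makes every `G ∩ {x ≥ 1_K}` bounded, so all
terms are finite, and the closed cube differs from the half-open one by a null set.
-/

theorem indicator_univ_pi_Ico_eq_alternating_sum {ι α R : Type*} [Fintype ι] [DecidableEq ι]
    [LinearOrder α] [CommRing R] {a b : ι → α} (hab : a ≤ b) (x : ι → α) :
    (Set.univ.pi fun i => Set.Ico (a i) (b i)).indicator (1 : (ι → α) → R) x =
      ∑ K : Finset ι, (-1 : R) ^ #K * (Set.Ici (K.piecewise b a)).indicator 1 x := by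
  have hcoord (i : ι) : (Set.Ico (a i) (b i)).indicator (1 : α → R) (x i) =
      (Set.Ici (a i)).indicator 1 (x i) - (Set.Ici (b i)).indicator 1 (x i) := by
    rw [← Set.Ici_sdiff_Ici, Set.indicator_sdiff (Set.Ici_subset_Ici.2 (hab i))]
    rfl
  have horthant (c : ι → α) :
      (Set.Ici c).indicator (1 : (ι → α) → R) x = ∏ i, (Set.Ici (c i)).indicator 1 (x i) := by
    rw [← Set.pi_univ_Ici, ← Finset.coe_univ, Set.indicator_pi_one_apply]
  rw [← Finset.coe_univ, Set.indicator_pi_one_apply]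
  simp only [hcoord, Finset.prod_sub, Finset.powerset_univ, horthant]
  refine Finset.sum_congr rfl fun K _ => ?_
  rw [mul_assoc, ← Finset.prod_mul_prod_compl K, Finset.compl_eq_univ_sdiff,
    mul_comm (∏ i ∈ univ \ K, _)]
  congr 2 <;> refine Finset.prod_congr rfl fun i hi => ?_
  · rw [Finset.piecewise_eq_of_mem _ _ _ hi]
  · rw [Finset.piecewise_eq_of_notMem _ _ _ (Finset.mem_sdiff.1 hi).2]

theorem measureReal_inter_univ_pi_Ico_eq_alternating_sum {ι α : Type*} [Fintype ι]
    [DecidableEq ι] [LinearOrder α] [TopologicalSpace α] [OrderClosedTopology α]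
    [MeasurableSpace α] [OpensMeasurableSpace α] {μ : Measure (ι → α)} {A : Set (ι → α)}
    (hA : MeasurableSet A) {a b : ι → α} (hab : a ≤ b) (hfin : μ (A ∩ Set.Ici a) ≠ ⊤) :
    μ.real (A ∩ Set.univ.pi fun i => Set.Ico (a i) (b i)) =
      ∑ K : Finset ι, (-1) ^ #K * μ.real (A ∩ Set.Ici (K.piecewise b a)) := by
  have hmeas (c : ι → α) : MeasurableSet (A ∩ Set.Ici c) :=
    hA.inter (Set.pi_univ_Ici c ▸ MeasurableSet.univ_pi fun _ => measurableSet_Ici)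
  have hint (K : Finset ι) :
      Integrable ((A ∩ Set.Ici (K.piecewise b a)).indicator (1 : (ι → α) → ℝ)) μ := by
    refine (integrable_indicator_iff (hmeas _)).2 (integrableOn_const (C := (1 : ℝ)) ?_)
    refine ne_top_of_le_ne_top hfin (measure_mono (Set.inter_subset_inter_right A ?_))
    exact Set.Ici_subset_Ici.2 fun i => by
      by_cases hi : i ∈ K <;> simp [hi, hab i]
  have hpointwise : (A ∩ Set.univ.pi fun i => Set.Ico (a i) (b i)).indicator (1 : (ι → α) → ℝ) =
      fun x => ∑ K : Finset ι, (-1) ^ #K * (A ∩ Set.Ici (K.piecewise b a)).indicator 1 x := by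
    ext x
    simp only [Set.inter_indicator_one, Pi.mul_apply,
      indicator_univ_pi_Ico_eq_alternating_sum hab, Finset.mul_sum]
    exact Finset.sum_congr rfl fun K _ => mul_left_comm _ _ _
  rw [← integral_indicator_one (hA.inter (MeasurableSet.univ_pi fun _ => measurableSet_Ico)),
    hpointwise, integral_finsetSum _ fun K _ => (hint K).const_mul _]
  simp only [integral_const_mul, integral_indicator_one (hmeas _)]

theorem halfspace_inter_Ici_zero_subset_Icc {ι : Type*} [Fintype ι] {w : ι → ℝ}
    (hw : ∀ i, 0 < w i) (z : ℝ) :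
    {x : ι → ℝ | ∑ i, w i * x i ≤ z} ∩ Set.Ici 0 ⊆ Set.Icc 0 fun i => z / w i := by
  rintro x ⟨hxz, hx0⟩
  refine ⟨hx0, fun i => (le_div_iff₀' (hw i)).2 ?_⟩
  calc w i * x i ≤ ∑ j, w j * x j :=
        Finset.single_le_sum (fun j _ => mul_nonneg (hw j).le (hx0 j)) (Finset.mem_univ i)
    _ ≤ z := hxz

theorem volume_halfspace_inter_unitCube_eq_alternating_sum_general
    (n : ℕ) (w : Fin n → ℝ) (hw : ∀ i, 0 < w i) (z : ℝ) :
    (volume ({x : Fin n → ℝ | ∑ i, w i * x i ≤ z} ∩ Set.Icc 0 1)).toReal =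
      ∑ K : Finset (Fin n), (-1 : ℝ) ^ K.card *
        (volume ({x : Fin n → ℝ | ∑ i, w i * x i ≤ z} ∩
          {x : Fin n → ℝ | ∀ i, (if i ∈ K then (1 : ℝ) else 0) ≤ x i})).toReal := by
  set A := {x : Fin n → ℝ | ∑ i, w i * x i ≤ z}
  have hA : MeasurableSet A := measurableSet_le (by fun_prop) measurable_const
  have hbdd : Bornology.IsBounded (A ∩ Set.Ici 0) :=
    (Metric.isBounded_Icc _ _).subset (halfspace_inter_Ici_zero_subset_Icc hw z)
  have hcube : volume (A ∩ Set.Icc 0 1) = volume (A ∩ Set.univ.pi fun _ => Set.Ico 0 1) :=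
    measure_congr ((Filter.EventuallyEq.refl _ A).inter Measure.univ_pi_Ico_ae_eq_Icc).symm
  have horthant (K : Finset (Fin n)) :
      {x : Fin n → ℝ | ∀ i, (if i ∈ K then (1 : ℝ) else 0) ≤ x i} = Set.Ici (K.piecewise 1 0) := by
    ext x
    simp [Pi.le_def, Finset.piecewise]
  simp only [hcube, horthant, ← measureReal_def]
  exact measureReal_inter_univ_pi_Ico_eq_alternating_sum hA zero_le_one hbdd.measure_lt_top.ne

/-- Signed simplicial decomposition of a sliced unit cube: for `w` with all positive
components and any real `z`, the volume of `G_{w,z}^n ∩ I^n` equals the alternating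
sum over subsets `K` of `[n]` of the volumes of the simplices `Δ_{w,z}^K`. -/
theorem volume_halfspace_inter_unitCube_eq_alternating_sum
    (n : ℕ) (hn : 0 < n) (w : Fin n → ℝ) (hw : ∀ i, 0 < w i) (z : ℝ) :
    (volume ({x : Fin n → ℝ | ∑ i, w i * x i ≤ z} ∩ Set.Icc 0 1)).toReal =
      ∑ K : Finset (Fin n), (-1 : ℝ) ^ K.card *
        (volume ({x : Fin n → ℝ | ∑ i, w i * x i ≤ z} ∩
          {x : Fin n → ℝ | ∀ i, (if i ∈ K then (1 : ℝ) else 0) ≤ x i})).toReal :=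
  volume_halfspace_inter_unitCube_eq_alternating_sum_general n w hw z
end

section
/- Let n be a positive integer, let w ∈ ℝⁿ have all nonzero components, and let z be a real number. Then vol_n(G_{w,z}ⁿ ∩ Iⁿ) = (1/(n! ∏_{i=1}^n wᵢ)) Σ_{K ⊆ [n]} (-1)^{|K|} (z − w·1_K)₊ⁿ. -/
/-!
The alternating sum over subsets `K` is the iterated backward difference `Δ_{w₀} ⋯ Δ_{wₙ₋₁}` of
`r ↦ r₊ⁿ` at `z`, where `Δ_a f (c) = f c - f (c - a)`. Slicing along the first coordinate,
`vol_{n+1}(w, z) = ∫₀¹ vol_n(w₁, …, wₙ; z - w₀ t) dt`, and integrating `(c - w₀ t)₊ⁿ` over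
`t ∈ [0, 1]` gives `Δ_{w₀}` of `r ↦ r₊ⁿ⁺¹ / ((n + 1) w₀)`: one more difference, and one more
factor `(n + 1) w₀` in the denominator, which is the induction step.
-/

open MeasureTheory Finset

/-- `r₊ⁿ`, with `r₊⁰` read as the indicator of `r ≥ 0`: with this reading the volume formula
also holds in dimension `0`, where the induction starts. -/
noncomputable def posPartPow (n : ℕ) (r : ℝ) : ℝ := if 0 ≤ r then r ^ n else 0

theorem posPartPow_succ (n : ℕ) (r : ℝ) : posPartPow (n + 1) r = max r 0 ^ (n + 1) := by
  unfold posPartPow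
  split_ifs with h
  · rw [max_eq_left h]
  · rw [max_eq_right (not_le.1 h).le, zero_pow n.succ_ne_zero]

theorem monotone_posPartPow (n : ℕ) : Monotone (posPartPow n) := by
  intro r s hrs
  unfold posPartPow
  split_ifs with hr hs hs
  · exact pow_le_pow_left₀ hr hrs n
  · exact absurd (hr.trans hrs) hs
  · exact pow_nonneg hs n
  · exact le_rfl

@[fun_prop]
theorem continuous_posPartPow_succ (n : ℕ) : Continuous (posPartPow (n + 1)) := by
  simp_rw [funext (posPartPow_succ n)]
  fun_prop

theorem hasDerivAt_posPartPow_succ (n : ℕ) {r : ℝ} (hr : r ≠ 0) :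
    HasDerivAt (posPartPow (n + 1)) ((n + 1) * posPartPow n r) r := by
  rcases hr.lt_or_gt with hr | hr
  · have hzero : posPartPow (n + 1) =ᶠ[nhds r] fun _ => 0 :=
      Filter.eventually_of_mem (Iio_mem_nhds hr) fun s hs => if_neg (not_le.2 hs)
    have hr' : posPartPow n r = 0 := if_neg (not_le.2 hr)
    rw [hr', mul_zero]
    exact (hasDerivAt_const r 0).congr_of_eventuallyEq hzero
  · have hpow : posPartPow (n + 1) =ᶠ[nhds r] fun s => s ^ (n + 1) :=
      Filter.eventually_of_mem (Ioi_mem_nhds hr) fun s hs => if_pos hs.le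
    have hr' : posPartPow n r = r ^ n := if_pos hr.le
    rw [hr']
    simpa using (hasDerivAt_pow (n + 1) r).congr_of_eventuallyEq hpow

theorem intervalIntegrable_posPartPow_comp_sub_mul (n : ℕ) (c a u v : ℝ) :
    IntervalIntegrable (fun t => posPartPow n (c - a * t)) volume u v := by
  rcases le_total 0 a with ha | ha
  · exact ((monotone_posPartPow n).comp_antitone fun s t hst => by nlinarith).intervalIntegrable
  · exact ((monotone_posPartPow n).comp fun s t hst => by nlinarith).intervalIntegrable

theorem integral_posPartPow_comp_sub_mul (n : ℕ) (c : ℝ) {a : ℝ} (ha : a ≠ 0) :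
    ∫ t in (0 : ℝ)..1, posPartPow n (c - a * t) =
      (posPartPow (n + 1) c - posPartPow (n + 1) (c - a)) / ((n + 1) * a) := by
  have hderiv : ∀ t ∉ ({c / a} : Set ℝ), HasDerivAt
      (fun t => -posPartPow (n + 1) (c - a * t) / ((n + 1) * a)) (posPartPow n (c - a * t)) t := by
    intro t ht
    have hne : c - a * t ≠ 0 := fun h =>
      ht (by rw [Set.mem_singleton_iff, eq_div_iff ha]; linarith)
    refine ((((hasDerivAt_posPartPow_succ n hne).comp t
      (((hasDerivAt_id t).const_mul a).const_sub c)).neg).div_const ((n + 1) * a)).congr_deriv ?_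
    field_simp
  rw [integral_eq_of_hasDerivAt_off_countable _ _ (Set.countable_singleton (c / a))
    (by fun_prop) (fun t ht => hderiv t ht.2)
    (intervalIntegrable_posPartPow_comp_sub_mul n c a 0 1)]
  simp only [mul_one, mul_zero, sub_zero]
  ring

theorem sum_finset_fin_succ {β : Type*} [AddCommMonoid β] {n : ℕ}
    (g : Finset (Fin (n + 1)) → β) :
    ∑ K, g K = ∑ K : Finset (Fin n), (g (K.image Fin.succ) + g (insert 0 (K.image Fin.succ))) := by
  have huniv : (univ : Finset (Fin (n + 1))) = insert 0 (univ.image Fin.succ) := by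
    ext i
    cases i using Fin.cases <;> simp
  rw [← powerset_univ, huniv, sum_powerset_insert (by simp), powerset_image,
    sum_image, sum_image, ← sum_add_distrib, powerset_univ]
  all_goals exact fun s _ t _ h => image_injective (Fin.succ_injective _) h

noncomputable def alternatingSubsetSum {n : ℕ} (f : ℝ → ℝ) (w : Fin n → ℝ) (z : ℝ) : ℝ :=
  ∑ K : Finset (Fin n), (-1) ^ K.card * f (z - ∑ i ∈ K, w i)

theorem alternatingSubsetSum_fin_zero (f : ℝ → ℝ) (w : Fin 0 → ℝ) (z : ℝ) :
    alternatingSubsetSum f w z = f z := by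
  rw [alternatingSubsetSum, Fintype.sum_unique, Subsingleton.elim default ∅]
  simp

theorem alternatingSubsetSum_succ {n : ℕ} (f : ℝ → ℝ) (w : Fin (n + 1) → ℝ) (z : ℝ) :
    alternatingSubsetSum f w z =
      alternatingSubsetSum (fun c => f c - f (c - w 0)) (Fin.tail w) z := by
  rw [alternatingSubsetSum, sum_finset_fin_succ]
  refine sum_congr rfl fun K _ => ?_
  have h0 : (0 : Fin (n + 1)) ∉ K.image Fin.succ := by simp [Fin.succ_ne_zero]
  rw [card_insert_of_notMem h0, sum_insert h0, card_image_of_injective _ (Fin.succ_injective _),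
    sum_image fun i _ j _ h => Fin.succ_injective _ h, pow_succ]
  simp only [Fin.tail, sub_add_eq_sub_sub_swap]
  ring

theorem alternatingSubsetSum_div_const {n : ℕ} (f : ℝ → ℝ) (w : Fin n → ℝ) (z k : ℝ) :
    alternatingSubsetSum (fun c => f c / k) w z = alternatingSubsetSum f w z / k := by
  simp only [alternatingSubsetSum, sum_div, mul_div_assoc]

theorem integral_alternatingSubsetSum_comp_sub_mul {n : ℕ} {f : ℝ → ℝ} {a u v : ℝ}
    (hf : ∀ c, IntervalIntegrable (fun t => f (c - a * t)) volume u v) (w : Fin n → ℝ) (z : ℝ) :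
    ∫ t in u..v, alternatingSubsetSum f w (z - a * t) =
      alternatingSubsetSum (fun c => ∫ t in u..v, f (c - a * t)) w z := by
  have hshift : ∀ (K : Finset (Fin n)) (t : ℝ),
      z - a * t - ∑ i ∈ K, w i = z - ∑ i ∈ K, w i - a * t := fun _ _ => by ring
  simp only [alternatingSubsetSum, hshift]
  rw [intervalIntegral.integral_finsetSum fun K _ => (hf _).const_mul _]
  simp only [intervalIntegral.integral_const_mul]

theorem toReal_volume_eq_integral_toReal_volume_cons {n : ℕ} {S : Set (Fin (n + 1) → ℝ)}
    (hS : MeasurableSet S) (hS_fin : volume S ≠ ⊤) :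
    (volume S).toReal = ∫ t, (volume {y : Fin n → ℝ | Fin.cons t y ∈ S}).toReal := by
  let e := MeasurableEquiv.piFinSuccAbove (fun _ : Fin (n + 1) => ℝ) 0
  have hE : MeasurableSet (e.symm ⁻¹' S) := e.symm.measurable hS
  have hslice : ∀ t : ℝ, {y : Fin n → ℝ | Fin.cons t y ∈ S} = Prod.mk t ⁻¹' (e.symm ⁻¹' S) := by
    intro t
    ext y
    simp [e, MeasurableEquiv.piFinSuccAbove_symm_apply, Fin.consEquiv]
  have hvol : volume S = ∫⁻ t, volume {y : Fin n → ℝ | Fin.cons t y ∈ S} := by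
    rw [← ((volume_preserving_piFinSuccAbove (fun _ => ℝ) 0).symm _).measure_preimage
      hS.nullMeasurableSet, Measure.volume_eq_prod, Measure.prod_apply hE]
    simp_rw [hslice]
  have hmeas : Measurable fun t : ℝ => volume {y : Fin n → ℝ | Fin.cons t y ∈ S} := by
    simp_rw [hslice]
    exact measurable_measure_prodMk_left hE
  rw [hvol, integral_toReal hmeas.aemeasurable (ae_lt_top hmeas (hvol ▸ hS_fin))]

def cubeSlice {n : ℕ} (w : Fin n → ℝ) (z : ℝ) : Set (Fin n → ℝ) :=
  {x | ∑ i, w i * x i ≤ z} ∩ Set.Icc 0 1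

theorem measurableSet_cubeSlice {n : ℕ} (w : Fin n → ℝ) (z : ℝ) :
    MeasurableSet (cubeSlice w z) :=
  (measurableSet_le (by fun_prop) measurable_const).inter measurableSet_Icc

theorem volume_cubeSlice_ne_top {n : ℕ} (w : Fin n → ℝ) (z : ℝ) :
    volume (cubeSlice w z) ≠ ⊤ :=
  ne_top_of_le_ne_top (by simp [Real.volume_Icc_pi]) (measure_mono Set.inter_subset_right)

theorem cons_mem_cubeSlice {n : ℕ} (w : Fin (n + 1) → ℝ) (z t : ℝ) (y : Fin n → ℝ) :
    (Fin.cons t y : Fin (n + 1) → ℝ) ∈ cubeSlice w z ↔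
      t ∈ Set.Icc 0 1 ∧ y ∈ cubeSlice (Fin.tail w) (z - w 0 * t) := by
  simp only [cubeSlice, Set.mem_inter_iff, Set.mem_ofPred_eq, Fin.sum_univ_succ, Fin.cons_zero,
    Fin.cons_succ, Set.mem_Icc, Fin.cons_le, Fin.le_cons, Pi.zero_apply, Pi.one_apply,
    Fin.tail_def, le_sub_iff_add_le']
  tauto

theorem toReal_volume_cubeSlice_fin_zero (w : Fin 0 → ℝ) (z : ℝ) :
    (volume (cubeSlice w z)).toReal = posPartPow 0 z := by
  by_cases hz : 0 ≤ z <;> simp [cubeSlice, posPartPow, hz]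

theorem toReal_volume_cubeSlice_succ {n : ℕ} (w : Fin (n + 1) → ℝ) (z : ℝ) :
    (volume (cubeSlice w z)).toReal =
      ∫ t in (0 : ℝ)..1, (volume (cubeSlice (Fin.tail w) (z - w 0 * t))).toReal := by
  have hslice : ∀ t : ℝ, (volume {y | Fin.cons t y ∈ cubeSlice w z}).toReal =
      (Set.Icc 0 1).indicator
        (fun t => (volume (cubeSlice (Fin.tail w) (z - w 0 * t))).toReal) t := by
    intro t
    by_cases ht : t ∈ Set.Icc (0 : ℝ) 1 <;> simp [cons_mem_cubeSlice, ht]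
  rw [toReal_volume_eq_integral_toReal_volume_cons (measurableSet_cubeSlice w z)
    (volume_cubeSlice_ne_top w z)]
  simp_rw [hslice]
  rw [integral_indicator measurableSet_Icc, integral_Icc_eq_integral_Ioc,
    ← intervalIntegral.integral_of_le zero_le_one]

open Nat in
theorem toReal_volume_cubeSlice {n : ℕ} (w : Fin n → ℝ) (hw : ∀ i, w i ≠ 0) (z : ℝ) :
    (volume (cubeSlice w z)).toReal =
      alternatingSubsetSum (posPartPow n) w z / (n ! * ∏ i, w i) := by
  induction n generalizing z with
  | zero => simp [toReal_volume_cubeSlice_fin_zero, alternatingSubsetSum_fin_zero]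
  | succ n ih =>
    have hw' : ∀ i, Fin.tail w i ≠ 0 := fun i => hw i.succ
    calc (volume (cubeSlice w z)).toReal
        = ∫ t in (0 : ℝ)..1, alternatingSubsetSum (posPartPow n) (Fin.tail w) (z - w 0 * t) /
            (n ! * ∏ i, Fin.tail w i) := by
          simp_rw [toReal_volume_cubeSlice_succ, ih (Fin.tail w) hw']
      _ = alternatingSubsetSum (fun c => ∫ t in (0 : ℝ)..1, posPartPow n (c - w 0 * t))
            (Fin.tail w) z / (n ! * ∏ i, Fin.tail w i) := by
          rw [intervalIntegral.integral_div, integral_alternatingSubsetSum_comp_sub_mul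
            fun c => intervalIntegrable_posPartPow_comp_sub_mul n c (w 0) 0 1]
      _ = alternatingSubsetSum (posPartPow (n + 1)) w z / ((n + 1)! * ∏ i, w i) := by
          simp_rw [integral_posPartPow_comp_sub_mul n _ (hw 0), alternatingSubsetSum_div_const,
            ← alternatingSubsetSum_succ, Fin.prod_univ_succ w, Nat.factorial_succ, Nat.cast_mul,
            div_div]
          simp only [Fin.tail, Nat.cast_succ]
          ring

/-- The volume of an arbitrary slice of the unit hypercube:
`vol_n(G_{w,z}^n ∩ I^n) = (1/(n! ∏ wᵢ)) ∑_{K ⊆ [n]} (-1)^{|K|} (z - w·1_K)₊^n`. -/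
theorem volume_halfspace_inter_unitCube
    (n : ℕ) (hn : 0 < n) (w : Fin n → ℝ) (hw : ∀ i, w i ≠ 0) (z : ℝ) :
    (volume ({x : Fin n → ℝ | ∑ i, w i * x i ≤ z} ∩ Set.Icc 0 1)).toReal =
      (1 / ((n.factorial : ℝ) * ∏ i, w i)) *
        ∑ K : Finset (Fin n), (-1 : ℝ) ^ K.card * (max (z - ∑ i ∈ K, w i) 0) ^ n := by
  obtain ⟨m, rfl⟩ := Nat.exists_eq_add_of_lt hn
  rw [one_div_mul_eq_div]
  simpa only [cubeSlice, alternatingSubsetSum, zero_add, posPartPow_succ] using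
    toReal_volume_cubeSlice w hw z
end

section
/- Let n be a positive integer, let w ∈ ℝⁿ have all positive components, and let θ be a positive real number. Let P_{w,θ}ⁿ be the polytope in ℝⁿ determined by the inequalities |xᵢ| ≤ wᵢ for i = 1,…,n and |Σ_{i=1}^n xᵢ| ≤ θ. Setting v := (w₁,…,wₙ,θ) ∈ ℝ^{n+1}, one has vol_n(P_{w,θ}ⁿ) = (1/n!) Σ_{s ∈ V_{n+1}} ε_s (v·s)₊ⁿ. -/
/-!
Translating by `w` maps the polytope onto the part of the box `∏ [0, 2wᵢ]` where
`∑ yᵢ ∈ [W - θ, W + θ]`, `W = ∑ wᵢ`. Up to the null hyperplane `∑ yᵢ = W - θ`, this is the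
difference of the cuts `{y ∈ box | ∑ yᵢ ≤ u}` for `u = W ± θ`. Integrating out one coordinate
at a time, with `∫₀ᵃ (t - y)₊^(k+1) dy = (t₊^(k+2) - (t - a)₊^(k+2)) / (k+2)`, the volume of a
cut of `∏ [0, cᵢ]` is an inclusion–exclusion sum over the vertices of the box,
`(1/n!) ∑_s ε_s (u - ∑_{sᵢ = false} cᵢ)₊ⁿ`. For `c = 2w` and `u = W ± θ` the vertex term
`u - ∑_{sᵢ = false} 2wᵢ` is exactly `v · (s, ±1)`.
-/

open MeasureTheory Finset

theorem hasDerivAt_max_zero_pow (k : ℕ) (x : ℝ) :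
    HasDerivAt (fun r : ℝ => max r 0 ^ (k + 2)) ((k + 2) * max x 0 ^ (k + 1)) x := by
  refine hasDerivAt_of_hasDerivAt_of_ne' (f := fun r : ℝ => max r 0 ^ (k + 2))
    (g := fun r : ℝ => (k + 2) * max r 0 ^ (k + 1)) (x := 0) (fun y hy => ?_)
    (by fun_prop) (by fun_prop) x
  rcases hy.lt_or_gt with hy | hy
  · have hzero : (fun r : ℝ => max r 0 ^ (k + 2)) =ᶠ[nhds y] fun _ => 0 := by
      filter_upwards [eventually_lt_nhds hy] with r hr
      simp [max_eq_right hr.le]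
    simpa [max_eq_right hy.le] using (hasDerivAt_const y (0 : ℝ)).congr_of_eventuallyEq hzero
  · have hpow : (fun r : ℝ => max r 0 ^ (k + 2)) =ᶠ[nhds y] fun r => r ^ (k + 2) := by
      filter_upwards [eventually_gt_nhds hy] with r hr
      rw [max_eq_left hr.le]
    simpa [max_eq_left hy.le] using (hasDerivAt_pow (k + 2) y).congr_of_eventuallyEq hpow

theorem integral_max_sub_zero_pow (k : ℕ) (t a : ℝ) :
    ∫ y in (0 : ℝ)..a, max (t - y) 0 ^ (k + 1) =
      (max t 0 ^ (k + 2) - max (t - a) 0 ^ (k + 2)) / (k + 2) := by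
  have hderiv (y : ℝ) : HasDerivAt (fun y : ℝ => -max (t - y) 0 ^ (k + 2) / (k + 2))
      (max (t - y) 0 ^ (k + 1)) y := by
    refine (((hasDerivAt_max_zero_pow k (t - y)).comp y
      ((hasDerivAt_id y).const_sub t)).neg.div_const ((k : ℝ) + 2)).congr_deriv ?_
    field_simp
  rw [intervalIntegral.integral_eq_sub_of_hasDerivAt (fun y _ => hderiv y)
    (by apply Continuous.intervalIntegrable; fun_prop), sub_zero, neg_div, neg_div,
    sub_neg_eq_add, neg_add_eq_sub, sub_div]

theorem addHaar_setOf_linearMap_eq {E : Type*} [NormedAddCommGroup E] [NormedSpace ℝ E]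
    [MeasurableSpace E] [BorelSpace E] [FiniteDimensional ℝ E] (μ : Measure E)
    [μ.IsAddHaarMeasure] {L : E →ₗ[ℝ] ℝ} (hL : Function.Surjective L) (a : ℝ) :
    μ {x | L x = a} = 0 := by
  have : ∀ᵐ x ∂μ, L x ∈ ({a}ᶜ : Set ℝ) :=
    (ae_comp_linearMap_mem_iff L μ volume hL (measurableSet_singleton a).compl).2
      (by simp [ae_iff])
  simpa [ae_iff] using this

section

variable {n : ℕ}

theorem volume_setOf_sum_eq (hn : 0 < n) (a : ℝ) :
    volume {y : Fin n → ℝ | ∑ i, y i = a} = 0 := by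
  let L : (Fin n → ℝ) →ₗ[ℝ] ℝ := ∑ i, LinearMap.proj i
  have hL : Function.Surjective L := fun t =>
    ⟨Pi.single ⟨0, hn⟩ t, by simp [L, LinearMap.sum_apply]⟩
  simpa [L, LinearMap.sum_apply] using addHaar_setOf_linearMap_eq volume hL a

def boxSlab (c : Fin n → ℝ) (u : ℝ) : Set (Fin n → ℝ) :=
  Set.univ.pi (fun i => Set.Icc 0 (c i)) ∩ {y | ∑ i, y i ≤ u}

theorem measurableSet_boxSlab (c : Fin n → ℝ) (u : ℝ) : MeasurableSet (boxSlab c u) :=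
  (MeasurableSet.univ_pi fun _ => measurableSet_Icc).inter
    (measurableSet_le (by fun_prop) (by fun_prop))

theorem volume_boxSlab_ne_top (c : Fin n → ℝ) (u : ℝ) : volume (boxSlab c u) ≠ ⊤ :=
  ne_top_of_le_ne_top (isCompact_univ_pi fun _ => isCompact_Icc).measure_ne_top
    (measure_mono Set.inter_subset_left)

theorem volume_boxSlab_succ (c : Fin (n + 1) → ℝ) (u : ℝ) :
    volume (boxSlab c u) = ∫⁻ y in Set.Icc 0 (c 0), volume (boxSlab (Fin.tail c) (u - y)) := by
  let t : Set (ℝ × (Fin n → ℝ)) := (Set.Icc 0 (c 0) ×ˢ Set.univ.pi fun i => Set.Icc 0 (c i.succ)) ∩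
    {p | p.1 + ∑ i, p.2 i ≤ u}
  have ht : MeasurableSet t :=
    (measurableSet_Icc.prod (MeasurableSet.univ_pi fun _ => measurableSet_Icc)).inter
      (measurableSet_le (by fun_prop) (by fun_prop))
  have hpre : boxSlab c u = MeasurableEquiv.piFinSuccAbove (fun _ => ℝ) 0 ⁻¹' t := by
    ext x
    simp only [boxSlab, t, Set.mem_inter_iff, Set.mem_univ_pi, Set.mem_ofPred_eq, Set.mem_preimage,
      Set.mem_prod, Fin.forall_fin_succ, Fin.sum_univ_succ]
    rfl
  rw [hpre, (volume_preserving_piFinSuccAbove (fun _ => ℝ) 0).measure_preimage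
    ht.nullMeasurableSet, Measure.volume_eq_prod, Measure.prod_apply ht,
    ← lintegral_indicator measurableSet_Icc]
  refine lintegral_congr fun y => ?_
  by_cases hy : y ∈ Set.Icc 0 (c 0)
  · rw [Set.indicator_of_mem hy]
    congr 1
    ext z
    simp only [t, boxSlab, Set.mem_preimage, Set.mem_inter_iff, Set.mem_prod, Set.mem_univ_pi,
      Set.mem_ofPred_eq, Fin.tail, le_sub_iff_add_le', hy, true_and]
  · have hempty : Prod.mk y ⁻¹' t = ∅ := Set.eq_empty_of_forall_notMem fun _ hz => hy hz.1.1
    rw [Set.indicator_of_notMem hy, hempty, measure_empty]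

theorem sum_tuple_bool_cons {M : Type*} [AddCommMonoid M] (f : (Fin (n + 1) → Bool) → M) :
    ∑ s, f s = ∑ s, (f (Fin.cons true s) + f (Fin.cons false s)) := by
  rw [← (Fin.consEquiv fun _ => Bool).sum_comp, Fintype.sum_prod_type, Fintype.sum_bool,
    sum_add_distrib]
  rfl

theorem sum_tuple_bool_snoc {M : Type*} [AddCommMonoid M] (f : (Fin (n + 1) → Bool) → M) :
    ∑ s, f s = ∑ s, (f (Fin.snoc s true) + f (Fin.snoc s false)) := by
  rw [← (Fin.snocEquiv fun _ => Bool).sum_comp, Fintype.sum_prod_type, Fintype.sum_bool,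
    sum_add_distrib]
  rfl

def polyaSum (c : Fin n → ℝ) (u : ℝ) : ℝ :=
  ∑ s : Fin n → Bool,
    (∏ i, if s i then (1 : ℝ) else -1) * max (u - ∑ i, if s i then 0 else c i) 0 ^ n

theorem continuous_polyaSum (c : Fin n → ℝ) : Continuous (polyaSum c) := by
  unfold polyaSum; fun_prop

theorem integral_polyaSum_tail {k : ℕ} (c : Fin (k + 2) → ℝ) (u : ℝ) :
    ∫ y in (0 : ℝ)..c 0, polyaSum (Fin.tail c) (u - y) = polyaSum c u / (k + 2) := by
  have hslice (e d : ℝ) : ∫ y in (0 : ℝ)..c 0, e * max (u - y - d) 0 ^ (k + 1) =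
      e * ((max (u - d) 0 ^ (k + 2) - max (u - d - c 0) 0 ^ (k + 2)) / (k + 2)) := by
    simp_rw [intervalIntegral.integral_const_mul, sub_right_comm u _ d]
    rw [integral_max_sub_zero_pow]
  unfold polyaSum
  rw [intervalIntegral.integral_finsetSum fun s _ => by
    apply Continuous.intervalIntegrable; fun_prop]
  rw [sum_tuple_bool_cons (n := k + 1), Finset.sum_div]
  refine Finset.sum_congr rfl fun s _ => ?_
  have hsign (b : Bool) : (∏ i, if (Fin.cons b s : Fin (k + 2) → Bool) i then (1 : ℝ) else -1) =
      (if b then 1 else -1) * ∏ i, if s i then (1 : ℝ) else -1 := by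
    simp only [Fin.prod_univ_succ, Fin.cons_zero, Fin.cons_succ]
  have hvertex (b : Bool) : (∑ i, if (Fin.cons b s : Fin (k + 2) → Bool) i then (0 : ℝ) else c i) =
      (if b then 0 else c 0) + ∑ i, if s i then 0 else Fin.tail c i := by
    simp only [Fin.sum_univ_succ, Fin.cons_zero, Fin.cons_succ, Fin.tail]
  rw [hslice, hsign, hsign, hvertex, hvertex]
  simp only [if_true, Bool.false_eq_true, if_false, zero_add, sub_add_eq_sub_sub_swap]
  ring

theorem polyaSum_one (c : Fin 1 → ℝ) (u : ℝ) : polyaSum c u = max u 0 - max (u - c 0) 0 := by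
  simp [polyaSum, sum_tuple_bool_cons (n := 0), sub_eq_add_neg]

theorem toReal_volume_boxSlab_one (c : Fin 1 → ℝ) (hc : 0 ≤ c 0) (u : ℝ) :
    (volume (boxSlab c u)).toReal = polyaSum c u := by
  have hpre : boxSlab c u = MeasurableEquiv.funUnique (Fin 1) ℝ ⁻¹' Set.Icc 0 (min (c 0) u) := by
    ext y
    simp only [boxSlab, Set.mem_inter_iff, Set.mem_univ_pi, Fin.forall_fin_one, Set.mem_ofPred_eq,
      Fin.sum_univ_one, Set.mem_preimage, MeasurableEquiv.funUnique_apply, Set.mem_Icc, le_min_iff]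
    tauto
  have hvol : volume (boxSlab c u) = volume (Set.Icc 0 (min (c 0) u)) :=
    hpre ▸ (volume_preserving_funUnique (Fin 1) ℝ).measure_preimage_equiv _
  rw [hvol, Real.volume_Icc, ENNReal.toReal_ofReal', polyaSum_one]
  rcases le_total u 0 with hu | hu <;> rcases le_total u (c 0) with huc | huc <;>
    simp [hu, huc, hc]
  linarith

theorem toReal_volume_boxSlab (hn : 0 < n) (c : Fin n → ℝ) (hc : ∀ i, 0 ≤ c i) (u : ℝ) :
    (volume (boxSlab c u)).toReal = polyaSum c u / n.factorial := by
  induction n, hn using Nat.le_induction generalizing u with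
  | base => simpa using toReal_volume_boxSlab_one c (hc 0) u
  | succ n hn ih =>
    obtain ⟨k, rfl⟩ : ∃ k, n = k + 1 := ⟨n - 1, by omega⟩
    have ih' (v : ℝ) := ih (Fin.tail c) (fun i => hc i.succ) v
    have hvol (v : ℝ) : volume (boxSlab (Fin.tail c) v) =
        ENNReal.ofReal (polyaSum (Fin.tail c) v / (k + 1).factorial) := by
      rw [← ih', ENNReal.ofReal_toReal (volume_boxSlab_ne_top _ _)]
    have hnonneg (v : ℝ) : 0 ≤ polyaSum (Fin.tail c) v / (k + 1).factorial :=
      ih' v ▸ ENNReal.toReal_nonneg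
    calc (volume (boxSlab c u)).toReal
        = (∫⁻ y in Set.Icc 0 (c 0),
            ENNReal.ofReal (polyaSum (Fin.tail c) (u - y) / (k + 1).factorial)).toReal := by
          simp only [volume_boxSlab_succ, hvol]
      _ = ∫ y in Set.Icc 0 (c 0), polyaSum (Fin.tail c) (u - y) / (k + 1).factorial :=
          (integral_eq_lintegral_of_nonneg_ae (ae_of_all _ fun y => hnonneg _)
            (((continuous_polyaSum _).comp (continuous_sub_left u)).div_const _
              |>.aestronglyMeasurable)).symm
      _ = (∫ y in (0 : ℝ)..c 0, polyaSum (Fin.tail c) (u - y)) / (k + 1).factorial := by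
          rw [integral_Icc_eq_integral_Ioc, ← intervalIntegral.integral_of_le (hc 0),
            intervalIntegral.integral_div]
      _ = polyaSum c u / (k + 1 + 1).factorial := by
          rw [integral_polyaSum_tail, Nat.factorial_succ (k + 1)]
          push_cast
          field_simp
          ring

theorem toReal_volume_box_inter_sum_mem_Icc (hn : 0 < n) (c : Fin n → ℝ) {a b : ℝ}
    (hab : a ≤ b) :
    (volume (Set.univ.pi (fun i => Set.Icc 0 (c i)) ∩ {y | ∑ i, y i ∈ Set.Icc a b})).toReal =
      (volume (boxSlab c b)).toReal - (volume (boxSlab c a)).toReal := by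
  have hmono : boxSlab c a ⊆ boxSlab c b :=
    Set.inter_subset_inter_right _ fun y hy => le_trans hy hab
  have hdiff : (Set.univ.pi (fun i => Set.Icc 0 (c i)) ∩ {y | ∑ i, y i ∈ Set.Icc a b}) \
      {y | ∑ i, y i = a} = boxSlab c b \ boxSlab c a := by
    ext y
    simp only [boxSlab, Set.mem_sdiff, Set.mem_inter_iff, Set.mem_ofPred_eq, Set.mem_Icc, not_and,
      not_le]
    constructor
    · rintro ⟨⟨hbox, hay, hyb⟩, hya⟩
      exact ⟨⟨hbox, hyb⟩, fun _ => lt_of_le_of_ne hay (Ne.symm hya)⟩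
    · rintro ⟨⟨hbox, hyb⟩, hay⟩
      exact ⟨⟨hbox, (hay hbox).le, hyb⟩, (hay hbox).ne'⟩
  rw [← measure_sdiff_null (volume_setOf_sum_eq hn a), hdiff,
    measure_sdiff hmono (measurableSet_boxSlab c a).nullMeasurableSet (volume_boxSlab_ne_top c a),
    ENNReal.toReal_sub_of_le (measure_mono hmono) (volume_boxSlab_ne_top c b)]

theorem polyaSum_two_mul_sub (w : Fin n → ℝ) (θ : ℝ) :
    polyaSum (fun i => 2 * w i) (∑ i, w i + θ) - polyaSum (fun i => 2 * w i) (∑ i, w i - θ) =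
      ∑ s : Fin (n + 1) → Bool, (∏ i, (if s i then (1 : ℝ) else -1)) *
        max (∑ i, (Fin.snoc w θ : Fin (n + 1) → ℝ) i * (if s i then (1 : ℝ) else -1)) 0 ^ n := by
  rw [sum_tuple_bool_snoc, polyaSum, polyaSum, ← sum_sub_distrib]
  refine Finset.sum_congr rfl fun s _ => ?_
  have hvertex : ∑ i, w i - ∑ i, (if s i then 0 else 2 * w i) =
      ∑ i, w i * (if s i then (1 : ℝ) else -1) := by
    rw [← sum_sub_distrib]
    exact Finset.sum_congr rfl fun i _ => by split_ifs <;> ring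
  simp only [Fin.prod_univ_castSucc, Fin.sum_univ_castSucc, Fin.snoc_castSucc, Fin.snoc_last,
    ← hvertex, if_true, Bool.false_eq_true, if_false]
  generalize ∑ i, w i = W, ∑ i, (if s i then (0 : ℝ) else 2 * w i) = D
  rw [show W + θ - D = W - D + θ * 1 by ring, show W - θ - D = W - D + θ * -1 by ring]
  ring

end

/-- Pólya's formula for the volume of the polytope `P_{w,θ}^n` given by `|xᵢ| ≤ wᵢ` and
`|∑ xᵢ| ≤ θ`: with `v = (w₁,…,wₙ,θ)`, `vol_n(P_{w,θ}^n) = (1/n!) ∑_{s ∈ V_{n+1}} ε_s (v·s)₊^n`. -/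
theorem volume_polya_polytope
    (n : ℕ) (hn : 0 < n) (w : Fin n → ℝ) (hw : ∀ i, 0 < w i) (θ : ℝ) (hθ : 0 < θ) :
    (volume {x : Fin n → ℝ | (∀ i, |x i| ≤ w i) ∧ |∑ i, x i| ≤ θ}).toReal =
      (1 / (n.factorial : ℝ)) *
        ∑ s : Fin (n + 1) → Bool,
          (∏ i, (if s i then (1 : ℝ) else -1)) *
            (max (∑ i, (Fin.snoc w θ : Fin (n + 1) → ℝ) i * (if s i then (1 : ℝ) else -1))
              0) ^ n := by
  have hc : ∀ i, 0 ≤ 2 * w i := fun i => by linarith [hw i]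
  have hshift : {x : Fin n → ℝ | (∀ i, |x i| ≤ w i) ∧ |∑ i, x i| ≤ θ} = (· + w) ⁻¹'
      (Set.univ.pi (fun i => Set.Icc 0 (2 * w i)) ∩
        {y | ∑ i, y i ∈ Set.Icc (∑ i, w i - θ) (∑ i, w i + θ)}) := by
    ext x
    simp only [Set.mem_ofPred_eq, Set.mem_preimage, Set.mem_inter_iff, Set.mem_univ_pi,
      Set.mem_Icc, Pi.add_apply, sum_add_distrib, abs_le]
    refine and_congr (forall_congr' fun i => ?_) ?_ <;> constructor <;>
      rintro ⟨h₁, h₂⟩ <;> constructor <;> linarith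
  rw [hshift, measure_preimage_add_right, toReal_volume_box_inter_sum_mem_Icc hn _ (by linarith),
    toReal_volume_boxSlab hn _ hc, toReal_volume_boxSlab hn _ hc, ← sub_div,
    polyaSum_two_mul_sub, one_div_mul_eq_div]
end

section
/- Let n be a positive integer, let w ∈ ℝⁿ have all nonzero components, and let θ be a positive real number. Setting v := (w₁,…,wₙ,θ) ∈ ℝ^{n+1}, one has vol_n(S_{w,θ}ⁿ ∩ Cⁿ) = 1 + (1/(2^{n−1} n! ∏_{i=1}^n wᵢ)) Σ_{s ∈ V_{n+1}^−} ε_s (v·s)₊ⁿ. -/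
/-!
Write `Φ_w(t)` for the volume of `{x ∈ Cⁿ | w·x ≤ t}`. Integrating out the first coordinate gives
`Φ_w(t) = ∫_{-1/2}^{1/2} Φ_{w'}(t - w₁ a) da`, and truncated powers integrate to truncated powers,
so by induction on `n`, `Φ_w(t) = (2ⁿ n! ∏ wᵢ)⁻¹ ∑_s ε_s (2t + w·s)₊ⁿ`. The slab is
`{w·x ≤ θ/2}` minus `{w·x < -θ/2}`, and the latter is the reflection of the part of the cube above
`{w·x = θ/2}`, so the slab has volume `2 Φ_w(θ/2) - 1`.
Finally `∑_s ε_s (a + w·s)ⁿ` is an `n`-fold central difference of `xⁿ`, hence equals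
`2ⁿ n! ∏ wᵢ`; with `xⁿ = x₊ⁿ + (-1)ⁿ (-x)₊ⁿ` and the flip `s ↦ -s`, this turns
`∑_s ε_s (θ + w·s)₊ⁿ` into `2ⁿ n! ∏ wᵢ - ∑_s ε_s (w·s - θ)₊ⁿ`, a sum over `V_{n+1}⁻`.
-/

open MeasureTheory Finset

open scoped Nat

noncomputable section

def boolSign (b : Bool) : ℝ := if b then 1 else -1

def signProd {n : ℕ} (s : Fin n → Bool) : ℝ := ∏ i, boolSign (s i)

def signDot {n : ℕ} (w : Fin n → ℝ) (s : Fin n → Bool) : ℝ := ∑ i, w i * boolSign (s i)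

/-- `truncPow n x` is `x₊ⁿ`, except that `truncPow 0` is the step function `[0 ≤ x]` rather than
`1`: this makes the volume formula true in dimension `0`, where the induction starts. -/
def truncPow (n : ℕ) (x : ℝ) : ℝ := if 0 ≤ x then x ^ n else 0

def centeredCube (n : ℕ) : Set (Fin n → ℝ) := Set.Icc (fun _ => -(1 / 2)) (fun _ => 1 / 2)

def halfspace {n : ℕ} (w : Fin n → ℝ) (t : ℝ) : Set (Fin n → ℝ) := {x | ∑ i, w i * x i ≤ t}

end

@[simp] lemma boolSign_true : boolSign true = 1 := rfl

@[simp] lemma boolSign_false : boolSign false = -1 := rfl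

lemma boolSign_not (b : Bool) : boolSign (!b) = -boolSign b := by
  cases b <;> simp

section SignSums

variable {n : ℕ}

lemma signProd_cons (b : Bool) (s : Fin n → Bool) :
    signProd (Fin.cons b s : Fin (n + 1) → Bool) = boolSign b * signProd s := by
  simp [signProd, Fin.prod_univ_succ]

lemma signDot_cons (w : Fin (n + 1) → ℝ) (b : Bool) (s : Fin n → Bool) :
    signDot w (Fin.cons b s) = w 0 * boolSign b + signDot (Fin.tail w) s := by
  simp [signDot, Fin.sum_univ_succ, Fin.tail]

lemma signProd_snoc (s : Fin n → Bool) (b : Bool) :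
    signProd (Fin.snoc s b : Fin (n + 1) → Bool) = signProd s * boolSign b := by
  simp [signProd, Fin.prod_univ_castSucc]

lemma signDot_snoc (w : Fin n → ℝ) (c : ℝ) (s : Fin n → Bool) (b : Bool) :
    signDot (Fin.snoc w c : Fin (n + 1) → ℝ) (Fin.snoc s b) = signDot w s + c * boolSign b := by
  simp [signDot, Fin.sum_univ_castSucc]

lemma signProd_not (s : Fin n → Bool) : signProd (fun i => !s i) = (-1) ^ n * signProd s := by
  simp [signProd, boolSign_not, prod_neg]

lemma signDot_not (w : Fin n → ℝ) (s : Fin n → Bool) :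
    signDot w (fun i => !s i) = -signDot w s := by
  simp [signDot, boolSign_not, sum_neg_distrib]

lemma sum_signProd_mul_cons (f : ℝ → ℝ) (w : Fin (n + 1) → ℝ) :
    ∑ s, signProd s * f (signDot w s) =
      ∑ s : Fin n → Bool, signProd s *
        (f (w 0 + signDot (Fin.tail w) s) - f (-w 0 + signDot (Fin.tail w) s)) := by
  rw [← (Fin.consEquiv fun _ => Bool).sum_comp, Fintype.sum_prod_type_right]
  refine sum_congr rfl fun s _ => ?_
  simp [Fin.consEquiv, signProd_cons, signDot_cons]
  ring

lemma sum_filter_apply_last_eq {α β : Type*} [Fintype α] [DecidableEq α] [AddCommMonoid β]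
    (b : α) (f : (Fin (n + 1) → α) → β) :
    ∑ s ∈ univ.filter (fun s : Fin (n + 1) → α => s (Fin.last n) = b), f s =
      ∑ s : Fin n → α, f (Fin.snoc s b) := by
  rw [sum_filter, ← (Fin.snocEquiv fun _ => α).sum_comp, Fintype.sum_prod_type]
  simp [Fin.snocEquiv]

lemma sum_signProd_mul_add_signDot_pow_cons (w : Fin (n + 1) → ℝ) (a : ℝ) (m : ℕ) :
    ∑ s, signProd s * (a + signDot w s) ^ m =
      ∑ k ∈ range m, m.choose k * (w 0 ^ (m - k) - (-w 0) ^ (m - k)) *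
        ∑ s : Fin n → Bool, signProd s * (a + signDot (Fin.tail w) s) ^ k := by
  have hdiff (x : ℝ) : (a + (w 0 + x)) ^ m - (a + (-w 0 + x)) ^ m =
      ∑ k ∈ range m, m.choose k * (w 0 ^ (m - k) - (-w 0) ^ (m - k)) * (a + x) ^ k := by
    rw [show a + (w 0 + x) = (a + x) + w 0 by ring, show a + (-w 0 + x) = (a + x) + -w 0 by ring,
      add_pow, add_pow, ← sum_sub_distrib, sum_range_succ, Nat.sub_self]
    simp only [pow_zero, sub_self, add_zero]
    exact sum_congr rfl fun k _ => by ring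
  rw [sum_signProd_mul_cons (fun x => (a + x) ^ m)]
  simp_rw [hdiff, mul_sum]
  rw [sum_comm]
  exact sum_congr rfl fun k _ => sum_congr rfl fun s _ => by ring

lemma sum_signProd_mul_add_signDot_pow_of_lt {m : ℕ} (hm : m < n) (w : Fin n → ℝ) (a : ℝ) :
    ∑ s, signProd s * (a + signDot w s) ^ m = 0 := by
  induction n generalizing m with
  | zero => exact absurd hm (Nat.not_lt_zero m)
  | succ n ih =>
    rw [sum_signProd_mul_add_signDot_pow_cons]
    exact sum_eq_zero fun k hk => by
      rw [ih (by have := mem_range.mp hk; omega), mul_zero]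

lemma sum_signProd_mul_add_signDot_pow_self (w : Fin n → ℝ) (a : ℝ) :
    ∑ s, signProd s * (a + signDot w s) ^ n = 2 ^ n * n ! * ∏ i, w i := by
  induction n with
  | zero => simp [signProd, signDot]
  | succ n ih =>
    rw [sum_signProd_mul_add_signDot_pow_cons, sum_range_succ, ih,
      sum_eq_zero fun k hk => by
        rw [sum_signProd_mul_add_signDot_pow_of_lt (mem_range.mp hk), mul_zero],
      Fin.prod_univ_succ, Nat.choose_succ_self_right, Nat.factorial_succ, Nat.add_sub_cancel_left]
    simp only [Fin.tail]
    push_cast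
    ring

end SignSums

section TruncPow

variable {n : ℕ}

lemma truncPow_eq_max_pow (hn : n ≠ 0) (x : ℝ) : truncPow n x = max x 0 ^ n := by
  unfold truncPow
  split_ifs with hx
  · rw [max_eq_left hx]
  · rw [max_eq_right (not_le.mp hx).le, zero_pow hn]

lemma truncPow_add_neg_one_pow_mul_truncPow_neg (hn : n ≠ 0) (x : ℝ) :
    truncPow n x + (-1) ^ n * truncPow n (-x) = x ^ n := by
  rw [truncPow_eq_max_pow hn, truncPow_eq_max_pow hn, ← mul_pow]
  rcases le_total 0 x with hx | hx
  · simp [max_eq_left hx, max_eq_right (neg_nonpos.mpr hx), zero_pow hn]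
  · simp [max_eq_right hx, max_eq_left (neg_nonneg.mpr hx), zero_pow hn]

lemma monotone_truncPow (n : ℕ) : Monotone (truncPow n) := by
  intro x y hxy
  unfold truncPow
  split_ifs with hx hy hy
  · exact pow_le_pow_left₀ hx hxy n
  · exact absurd (hx.trans hxy) hy
  · positivity
  · rfl

lemma continuous_truncPow_succ (n : ℕ) : Continuous (truncPow (n + 1)) := by
  simp_rw [funext (truncPow_eq_max_pow n.succ_ne_zero)]
  fun_prop

lemma hasDerivAt_truncPow_succ {x : ℝ} (hx : x ≠ 0) :
    HasDerivAt (truncPow (n + 1)) ((n + 1) * truncPow n x) x := by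
  rcases hx.lt_or_gt with hx | hx
  · have hzero : truncPow (n + 1) =ᶠ[nhds x] fun _ => 0 :=
      Filter.mem_of_superset (Iio_mem_nhds hx) fun y hy => if_neg (not_le.mpr hy)
    simpa [truncPow, not_le.mpr hx] using
      (hasDerivAt_const x (0 : ℝ)).congr_of_eventuallyEq hzero
  · have hpow : truncPow (n + 1) =ᶠ[nhds x] fun y => y ^ (n + 1) :=
      Filter.mem_of_superset (Ioi_mem_nhds hx) fun y hy => if_pos (le_of_lt hy)
    simpa [truncPow, hx.le] using (hasDerivAt_pow (n + 1) x).congr_of_eventuallyEq hpow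

lemma integral_truncPow (n : ℕ) (a b : ℝ) :
    ∫ x in a..b, truncPow n x = (truncPow (n + 1) b - truncPow (n + 1) a) / (n + 1) := by
  rw [sub_div]
  refine integral_eq_of_hasDerivAt_off_countable
    (fun x => truncPow (n + 1) x / (n + 1)) _ (Set.countable_singleton 0)
    ((continuous_truncPow_succ n).div_const _).continuousOn (fun x hx => ?_)
    (monotone_truncPow n).intervalIntegrable
  have hderiv := (hasDerivAt_truncPow_succ (n := n) hx.2).div_const ((n : ℝ) + 1)
  rwa [mul_div_cancel_left₀ _ n.cast_add_one_ne_zero] at hderiv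

lemma intervalIntegrable_truncPow_sub_mul (n : ℕ) (c m a b : ℝ) :
    IntervalIntegrable (fun x => truncPow n (c - m * x)) volume a b := by
  rcases le_total 0 m with hm | hm
  · exact (Monotone.comp_antitone (monotone_truncPow n)
      fun x y hxy => by nlinarith).intervalIntegrable
  · exact (Monotone.comp (monotone_truncPow n)
      fun x y hxy => by nlinarith).intervalIntegrable

lemma integral_truncPow_sub_mul {m : ℝ} (hm : m ≠ 0) (c a b : ℝ) :
    ∫ x in a..b, truncPow n (c - m * x) =
      (truncPow (n + 1) (c - m * a) - truncPow (n + 1) (c - m * b)) / ((n + 1) * m) := by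
  rw [intervalIntegral.integral_comp_sub_mul _ hm, integral_truncPow, smul_eq_mul]
  field_simp

end TruncPow

lemma sum_signProd_mul_truncPow_add_add_sum_sub {n : ℕ} (hn : n ≠ 0) (w : Fin n → ℝ) (θ : ℝ) :
    ∑ s, signProd s * truncPow n (θ + signDot w s) +
        ∑ s, signProd s * truncPow n (signDot w s - θ) =
      2 ^ n * n ! * ∏ i, w i := by
  have hflip : ∑ s, signProd s * truncPow n (signDot w s - θ) =
      ∑ s, signProd s * ((-1) ^ n * truncPow n (-(θ + signDot w s))) := by
    have hnot : Function.Involutive fun (s : Fin n → Bool) i => !s i :=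
      fun s => funext fun i => Bool.not_not (s i)
    rw [← hnot.bijective.sum_comp]
    refine sum_congr rfl fun s _ => ?_
    rw [signProd_not, signDot_not, show -signDot w s - θ = -(θ + signDot w s) by ring]
    ring
  rw [hflip, ← sum_add_distrib, ← sum_signProd_mul_add_signDot_pow_self w θ]
  refine sum_congr rfl fun s _ => ?_
  rw [← truncPow_add_neg_one_pow_mul_truncPow_neg hn (θ + signDot w s)]
  ring

section Volume

variable {n : ℕ}

lemma volume_centeredCube (n : ℕ) : volume (centeredCube n) = 1 := by
  norm_num [centeredCube, Real.volume_Icc_pi]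

lemma measurableSet_centeredCube (n : ℕ) : MeasurableSet (centeredCube n) := measurableSet_Icc

lemma measurableSet_halfspace (w : Fin n → ℝ) (t : ℝ) : MeasurableSet (halfspace w t) :=
  measurableSet_le (by fun_prop) measurable_const

lemma volume_halfspace_inter_centeredCube_lt_top (w : Fin n → ℝ) (t : ℝ) :
    volume (halfspace w t ∩ centeredCube n) < ⊤ :=
  (measure_mono Set.inter_subset_right).trans_lt (by simp [volume_centeredCube])

lemma cons_preimage_halfspace (w : Fin (n + 1) → ℝ) (t a : ℝ) :
    Fin.cons (α := fun _ => ℝ) a ⁻¹' halfspace w t = halfspace (Fin.tail w) (t - w 0 * a) := by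
  ext y
  simp [halfspace, Fin.sum_univ_succ, Fin.tail, le_sub_iff_add_le']

lemma cons_preimage_centeredCube (a : ℝ) :
    Fin.cons (α := fun _ => ℝ) a ⁻¹' centeredCube (n + 1) =
      if a ∈ Set.Icc (-(1 / 2)) (1 / 2) then centeredCube n else ∅ := by
  rw [← funext (Fin.insertNth_zero' a)]
  split_ifs with ha
  · exact Fin.preimage_insertNth_Icc_of_mem ha
  · exact Fin.preimage_insertNth_Icc_of_notMem ha

lemma volume_real_eq_integral_volume_real_cons_preimage {S : Set (Fin (n + 1) → ℝ)}
    (hS : MeasurableSet S) (hfin : volume S ≠ ⊤) :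
    volume.real S = ∫ a, volume.real (Fin.cons (α := fun _ => ℝ) a ⁻¹' S) := by
  have hmp := (volume_preserving_piFinSuccAbove (fun _ : Fin (n + 1) => ℝ) 0).symm
  have hS' : MeasurableSet ((MeasurableEquiv.piFinSuccAbove (fun _ => ℝ) 0).symm ⁻¹' S) :=
    (MeasurableEquiv.measurable _) hS
  have hslice := measurable_measure_prodMk_left (ν := (volume : Measure (Fin n → ℝ))) hS'
  have hprod := hmp.measure_preimage hS.nullMeasurableSet
  rw [Measure.volume_eq_prod, Measure.prod_apply hS'] at hprod
  rw [measureReal_def, ← hprod, ← integral_toReal hslice.aemeasurable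
    (ae_lt_top hslice (hprod ▸ hfin))]
  simp [measureReal_def, Set.preimage, Fin.consEquiv]

lemma volume_real_halfspace_inter_centeredCube_succ (w : Fin (n + 1) → ℝ) (t : ℝ) :
    volume.real (halfspace w t ∩ centeredCube (n + 1)) =
      ∫ a in (-(1 / 2))..(1 / 2),
        volume.real (halfspace (Fin.tail w) (t - w 0 * a) ∩ centeredCube n) := by
  rw [volume_real_eq_integral_volume_real_cons_preimage
      ((measurableSet_halfspace w t).inter (measurableSet_centeredCube _))
      (volume_halfspace_inter_centeredCube_lt_top w t).ne,
    intervalIntegral.integral_of_le (by norm_num), ← integral_Icc_eq_integral_Ioc,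
    ← integral_indicator measurableSet_Icc]
  refine integral_congr_ae (Filter.Eventually.of_forall fun a => ?_)
  simp only [Set.preimage_inter, cons_preimage_halfspace, cons_preimage_centeredCube,
    Set.indicator_apply]
  split_ifs <;> simp

theorem volume_real_halfspace_inter_centeredCube (w : Fin n → ℝ) (hw : ∀ i, w i ≠ 0) (t : ℝ) :
    volume.real (halfspace w t ∩ centeredCube n) =
      (2 ^ n * n ! * ∏ i, w i)⁻¹ * ∑ s, signProd s * truncPow n (2 * t + signDot w s) := by
  induction n generalizing t with
  | zero =>
    by_cases ht : 0 ≤ t <;>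
      simp [halfspace, ht, truncPow, signProd, signDot, measureReal_def, volume_centeredCube]
  | succ n ih =>
    have hw0 : 2 * w 0 ≠ 0 := mul_ne_zero two_ne_zero (hw 0)
    have hslice (s : Fin n → Bool) (a : ℝ) : 2 * (t - w 0 * a) + signDot (Fin.tail w) s =
        (2 * t + signDot (Fin.tail w) s) - 2 * w 0 * a := by ring
    rw [volume_real_halfspace_inter_centeredCube_succ]
    simp_rw [ih (Fin.tail w) (fun i => hw i.succ), hslice]
    rw [intervalIntegral.integral_const_mul, intervalIntegral.integral_finsetSum fun s _ =>
        (intervalIntegrable_truncPow_sub_mul n _ _ _ _).const_mul _,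
      sum_signProd_mul_cons (fun x => truncPow (n + 1) (2 * t + x)), mul_sum,
      mul_sum]
    refine sum_congr rfl fun s _ => ?_
    rw [intervalIntegral.integral_const_mul, integral_truncPow_sub_mul hw0,
      show 2 * t + signDot (Fin.tail w) s - 2 * w 0 * -(1 / 2) =
        2 * t + (w 0 + signDot (Fin.tail w) s) by ring,
      show 2 * t + signDot (Fin.tail w) s - 2 * w 0 * (1 / 2) =
        2 * t + (-w 0 + signDot (Fin.tail w) s) by ring,
      Fin.prod_univ_succ, Nat.factorial_succ]
    have hprod : ∏ i, Fin.tail w i ≠ 0 := prod_ne_zero_iff.mpr fun i _ => hw i.succ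
    simp only [Fin.tail] at hprod ⊢
    push_cast
    field_simp
    ring

lemma neg_setOf_lt_neg_inter_centeredCube (w : Fin n → ℝ) (t : ℝ) :
    -({x | ∑ i, w i * x i < -t} ∩ centeredCube n) =
      centeredCube n \ (halfspace w t ∩ centeredCube n) := by
  ext x
  simp only [Set.mem_neg, Set.mem_inter_iff, Set.mem_ofPred_eq, Set.mem_sdiff, halfspace,
    centeredCube, Set.mem_Icc, Pi.le_def, Pi.neg_apply, mul_neg, sum_neg_distrib,
    neg_lt_neg_iff, not_and, neg_le]
  grind

lemma volume_real_setOf_abs_le_inter_centeredCube (w : Fin n → ℝ) {t : ℝ} (ht : 0 ≤ t) :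
    volume.real ({x | |∑ i, w i * x i| ≤ t} ∩ centeredCube n) =
      2 * volume.real (halfspace w t ∩ centeredCube n) - 1 := by
  set T := {x | ∑ i, w i * x i < -t} ∩ centeredCube n
  have hT : MeasurableSet T :=
    (measurableSet_lt (by fun_prop) measurable_const).inter (measurableSet_centeredCube n)
  have hslab : {x | |∑ i, w i * x i| ≤ t} ∩ centeredCube n =
      (halfspace w t ∩ centeredCube n) \ T := by
    ext x
    simp only [Set.mem_inter_iff, Set.mem_ofPred_eq, Set.mem_sdiff, halfspace, T, abs_le,
      not_and]
    grind
  have hTsub : T ⊆ halfspace w t ∩ centeredCube n := fun x ⟨hx, hC⟩ =>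
    ⟨by simp only [halfspace, Set.mem_ofPred_eq]; linarith [hx.out], hC⟩
  have hvolT : volume.real T = 1 - volume.real (halfspace w t ∩ centeredCube n) := by
    rw [measureReal_def, ← Measure.measure_neg, ← measureReal_def,
      neg_setOf_lt_neg_inter_centeredCube,
      measureReal_sdiff Set.inter_subset_right
        ((measurableSet_halfspace w t).inter (measurableSet_centeredCube n))
        (by simp [volume_centeredCube]),
      measureReal_def, volume_centeredCube, ENNReal.toReal_one]
  rw [hslab, measureReal_sdiff hTsub hT (volume_halfspace_inter_centeredCube_lt_top w t).ne, hvolT]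
  ring

end Volume

/-- Alternative formula for the volume of a central slab of the centered unit cube:
with `v = (w₁,…,wₙ,θ)`,
`vol_n(S_{w,θ}^n ∩ C^n) = 1 + (1/(2^{n-1} n! ∏ wᵢ)) ∑_{s ∈ V_{n+1}⁻} ε_s (v·s)₊^n`,
where `V_{n+1}⁻` consists of sign vectors whose last coordinate is `-1`. -/
theorem volume_centralSlab_inter_centeredCube'
    (n : ℕ) (hn : 0 < n) (w : Fin n → ℝ) (hw : ∀ i, w i ≠ 0) (θ : ℝ) (hθ : 0 < θ) :
    (volume ({x : Fin n → ℝ | |∑ i, w i * x i| ≤ θ / 2} ∩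
        Set.Icc (fun _ => -(1/2 : ℝ)) (fun _ => (1/2 : ℝ)))).toReal =
      1 + (1 / ((2 : ℝ) ^ (n - 1) * (n.factorial : ℝ) * ∏ i, w i)) *
        ∑ s ∈ Finset.univ.filter (fun s : Fin (n + 1) → Bool => s (Fin.last n) = false),
          (∏ i, (if s i then (1 : ℝ) else -1)) *
            (max (∑ i, (Fin.snoc w θ : Fin (n + 1) → ℝ) i * (if s i then (1 : ℝ) else -1))
              0) ^ n := by
  show volume.real ({x | |∑ i, w i * x i| ≤ θ / 2} ∩ centeredCube n) =
    1 + 1 / (2 ^ (n - 1) * n ! * ∏ i, w i) *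
      ∑ s ∈ univ.filter (fun s : Fin (n + 1) → Bool => s (Fin.last n) = false),
        signProd s * max (signDot (Fin.snoc w θ) s) 0 ^ n
  obtain ⟨m, rfl⟩ := Nat.exists_eq_add_one_of_ne_zero hn.ne'
  have hsum := sum_signProd_mul_truncPow_add_add_sum_sub (Nat.add_one_ne_zero m) w θ
  have hprod : ∏ i, w i ≠ 0 := prod_ne_zero_iff.mpr fun i _ => hw i
  rw [volume_real_setOf_abs_le_inter_centeredCube w (by positivity),
    volume_real_halfspace_inter_centeredCube w hw, show 2 * (θ / 2) = θ by ring,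
    sum_filter_apply_last_eq]
  simp only [signProd_snoc, signDot_snoc, boolSign_false, mul_neg_one, neg_mul,
    ← sub_eq_add_neg, ← truncPow_eq_max_pow (Nat.add_one_ne_zero m), sum_neg_distrib,
    Nat.add_sub_cancel]
  field_simp
  linear_combination (2 : ℝ) ^ m * 2 * hsum
end

section
/- Let n be a positive integer, let w ∈ ℝⁿ, let θ ∈ ℝ, and set v := (w₁,…,wₙ,θ) ∈ ℝ^{n+1}. Then Σ_{s ∈ V_{n+1}^+} ε_s (v·s)ⁿ = 2ⁿ n! ∏_{i=1}^n wᵢ, where V_{n+1}^+ is the set of s ∈ {−1,1}^{n+1} whose last coordinate is +1. -/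
open Finset

lemma sign_pow_sum (n : ℕ) (e : Fin n → ℕ) :
    ∑ t : Fin n → Bool, ∏ i, (if t i then (1:ℝ) else -1) ^ (e i)
      = ∏ i, (1 + (-1:ℝ) ^ (e i)) := by
  have h : ∀ i : Fin n, (1 + (-1:ℝ) ^ (e i))
      = ∑ b : Bool, (if b then (1:ℝ) else -1) ^ (e i) := by
    intro i; simp [Fintype.sum_bool]
  rw [Finset.prod_congr rfl fun i _ => h i, Finset.prod_univ_sum,
    Fintype.piFinset_univ]

lemma key_signed (n : ℕ) (w : Fin n → ℝ) (θ : ℝ) :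
    ∑ t : Fin n → Bool, (∏ i, (if t i then (1:ℝ) else -1)) *
        (θ + ∑ i, w i * (if t i then (1:ℝ) else -1)) ^ n
      = (2:ℝ) ^ n * (n.factorial : ℝ) * ∏ i, w i := by
  set ε : Bool → ℝ := fun b => if b then 1 else -1 with hε
  -- rewrite the inner sum as a sum over Fin (n+1)
  have hsum : ∀ t : Fin n → Bool,
      θ + ∑ i, w i * ε (t i)
        = ∑ i : Fin (n+1), (Fin.snoc (fun i => w i * ε (t i)) θ : Fin (n+1) → ℝ) i := by
    intro t
    rw [Fin.sum_univ_castSucc]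
    simp [add_comm]
  -- expand the power
  have hpow : ∀ t : Fin n → Bool,
      (θ + ∑ i, w i * ε (t i)) ^ n
        = ∑ k ∈ Finset.piAntidiag (univ : Finset (Fin (n+1))) n,
            (Nat.multinomial univ k : ℝ) *
              ((∏ i : Fin n, (w i * ε (t i)) ^ (k i.castSucc)) * θ ^ (k (Fin.last n))) := by
    intro t
    rw [hsum t, Finset.sum_pow_eq_sum_piAntidiag]
    refine Finset.sum_congr rfl fun k _ => ?_
    rw [Fin.prod_univ_castSucc]
    simp
  -- combine and swap sums
  have step1 :
      ∑ t : Fin n → Bool, (∏ i, ε (t i)) * (θ + ∑ i, w i * ε (t i)) ^ n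
        = ∑ k ∈ Finset.piAntidiag (univ : Finset (Fin (n+1))) n,
            (Nat.multinomial univ k : ℝ) * θ ^ (k (Fin.last n)) *
              (∏ i : Fin n, (w i) ^ (k i.castSucc)) *
              (∏ i : Fin n, (1 + (-1:ℝ) ^ (k i.castSucc + 1))) := by
    simp_rw [hpow, Finset.mul_sum]
    rw [Finset.sum_comm]
    refine Finset.sum_congr rfl fun k _ => ?_
    rw [← sign_pow_sum n (fun i => k i.castSucc + 1), Finset.mul_sum]
    refine Finset.sum_congr rfl fun t _ => ?_
    simp_rw [mul_pow, pow_succ]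
    rw [Finset.prod_mul_distrib, Finset.prod_mul_distrib]
    ring
  rw [step1]
  -- the unique surviving multi-index
  set k0 : Fin (n+1) → ℕ := Fin.snoc (fun _ => 1) 0 with hk0
  have hk0mem : k0 ∈ Finset.piAntidiag (univ : Finset (Fin (n+1))) n := by
    rw [Finset.mem_piAntidiag]
    constructor
    · rw [Fin.sum_univ_castSucc]
      simp [hk0]
    · intro i _; exact Finset.mem_univ i
  rw [Finset.sum_eq_single k0]
  · -- value at k0
    have hmul : Nat.multinomial (univ : Finset (Fin (n+1))) k0 = n.factorial := by
      have hs := Nat.multinomial_spec (univ : Finset (Fin (n+1))) k0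
      have hprod : (∏ i, (k0 i).factorial) = 1 := by
        apply Finset.prod_eq_one
        intro i _
        have : k0 i = 0 ∨ k0 i = 1 := by
          refine Fin.lastCases ?_ ?_ i <;> simp [hk0]
        rcases this with h | h <;> simp [h]
      have hsum0 : (∑ i, k0 i) = n := by
        rw [Fin.sum_univ_castSucc]; simp [hk0]
      rw [hprod, one_mul, hsum0] at hs
      exact hs
    have h1 : ∀ i : Fin n, k0 i.castSucc = 1 := fun i => by simp [hk0]
    have h2 : k0 (Fin.last n) = 0 := by simp [hk0]
    rw [hmul]
    simp only [h1, h2]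
    norm_num [Finset.prod_const, mul_comm, mul_assoc, mul_left_comm]
  · -- other terms vanish
    intro k hk hne
    by_cases hodd : ∀ i : Fin n, Odd (k i.castSucc)
    · exfalso
      rw [Finset.mem_piAntidiag] at hk
      obtain ⟨hks, -⟩ := hk
      rw [Fin.sum_univ_castSucc] at hks
      have hge : ∀ i : Fin n, 1 ≤ k i.castSucc := fun i => (hodd i).pos
      have hles : n ≤ ∑ i : Fin n, k i.castSucc := by
        calc n = ∑ _i : Fin n, 1 := by simp
        _ ≤ _ := Finset.sum_le_sum fun i _ => hge i
      have hlast : k (Fin.last n) = 0 := by omega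
      have hsumn : ∑ i : Fin n, k i.castSucc = n := by omega
      have hall1 : ∀ i : Fin n, k i.castSucc = 1 := by
        by_contra hc
        push_neg at hc
        obtain ⟨j, hj⟩ := hc
        have h2j : 1 < k j.castSucc := lt_of_le_of_ne (hge j) (Ne.symm hj)
        have : (∑ _i : Fin n, 1) < ∑ i : Fin n, k i.castSucc :=
          Finset.sum_lt_sum (fun i _ => hge i) ⟨j, Finset.mem_univ j, h2j⟩
        simp [hsumn] at this
      apply hne
      funext i
      refine Fin.lastCases ?_ ?_ i
      · simp [hk0, hlast]
      · intro j; simp [hk0, hall1 j]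
    · push_neg at hodd
      obtain ⟨j, hj⟩ := hodd
      rw [Nat.not_odd_iff_even] at hj
      have : (1 + (-1:ℝ) ^ (k j.castSucc + 1)) = 0 := by
        rw [Odd.neg_one_pow (hj.add_one)]
        ring
      have hz : (∏ i : Fin n, (1 + (-1:ℝ) ^ (k i.castSucc + 1))) = 0 :=
        Finset.prod_eq_zero (Finset.mem_univ j) this
      rw [hz, mul_zero]
  · intro h; exact absurd hk0mem h

/-- For `v = (w₁,…,wₙ,θ)`, the signed sum of `(v·s)^n` over the sign vectors
`s ∈ {−1,1}^{n+1}` whose last coordinate is `+1` equals `2^n n! ∏ wᵢ`. -/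
theorem signed_sum_over_positive_last_coordinate
    (n : ℕ) (hn : 0 < n) (w : Fin n → ℝ) (θ : ℝ) :
    ∑ s ∈ Finset.univ.filter (fun s : Fin (n + 1) → Bool => s (Fin.last n) = true),
        (∏ i, (if s i then (1 : ℝ) else -1)) *
          (∑ i, (Fin.snoc w θ : Fin (n + 1) → ℝ) i * (if s i then (1 : ℝ) else -1)) ^ n =
      (2 : ℝ) ^ n * (n.factorial : ℝ) * ∏ i, w i := by
  rw [← key_signed n w θ]
  refine Finset.sum_nbij' (fun s => s ∘ Fin.castSucc) (fun t => Fin.snoc t true)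
    (fun s _ => Finset.mem_univ _) ?_ ?_ ?_ ?_
  · intro t _
    simp [Finset.mem_filter]
  · intro s hs
    rw [Finset.mem_filter] at hs
    funext i
    refine Fin.lastCases ?_ ?_ i
    · simp [hs.2]
    · intro j; simp
  · intro t _
    funext j
    simp
  · intro s hs
    rw [Finset.mem_filter] at hs
    congr 1
    · rw [Fin.prod_univ_castSucc]
      simp [hs.2]
    · rw [Fin.sum_univ_castSucc]
      simp [hs.2, add_comm]
end

section
/- Let n be a positive integer, let w ∈ ℝⁿ have all positive components, let z ∈ ℝ, let K ⊆ [n], and let α₁,…,αₙ be positive integers. Then ∫_{Δ_{w, z−w·1_K}^∅} ∏_{i=1}^n xᵢ^{αᵢ} dx = ((z − w·1_K)₊^{n+Σᵢαᵢ} · ∏_{i=1}^n αᵢ!) / ((n + Σᵢαᵢ)! · ∏_{i=1}^n wᵢ^{αᵢ+1}). -/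
/-!
Induction on the dimension. The slice of `{x ≥ 0, w·x ≤ t}` at `x₀ = y` is the simplex with
weights `w₁, …, wₙ₋₁` and budget `t - w₀ y`, so by induction the inner integral is a constant
times `(t - w₀ y)^N`. What remains is the Beta integral
`∫₀^{t/c} yᵃ (t - c y)ᵇ dy = t^{a+b+1} a! b! / ((a+b+1)! c^{a+1})`, proved by integration by
parts in `a`.
-/

open MeasureTheory Finset
open scoped ENNReal Nat

theorem hasDerivAt_sub_mul_pow (t c y : ℝ) (b : ℕ) :
    HasDerivAt (fun y => (t - c * y) ^ (b + 1)) (-(c * (b + 1)) * (t - c * y) ^ b) y := by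
  refine ((((hasDerivAt_id' y).const_mul c).const_sub t).fun_pow (b + 1)).congr_deriv ?_
  push_cast
  ring

theorem integral_pow_mul_sub_mul_pow (a b : ℕ) {t c : ℝ} (hc : c ≠ 0) :
    ∫ y in (0 : ℝ)..t / c, y ^ a * (t - c * y) ^ b =
      t ^ (a + b + 1) * a ! * b ! / ((a + b + 1)! * c ^ (a + 1)) := by
  have hend : t - c * (t / c) = 0 := by field_simp; ring
  induction a generalizing b with
  | zero =>
    simp only [pow_zero, one_mul]
    rw [intervalIntegral.integral_comp_sub_mul (fun y => y ^ b) hc, hend, integral_pow]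
    simp [Nat.factorial_succ]
    field_simp
  | succ a ih =>
    have hibp := intervalIntegral.integral_mul_deriv_eq_deriv_mul (a := 0) (b := t / c)
      (fun y _ => by simpa using hasDerivAt_pow (a + 1) y)
      (fun y _ => hasDerivAt_sub_mul_pow t c y b)
      (Continuous.intervalIntegrable (by fun_prop) _ _)
      (Continuous.intervalIntegrable (by fun_prop) _ _)
    simp only [hend, zero_pow (Nat.succ_ne_zero _), mul_zero, zero_mul, sub_zero,
      zero_sub] at hibp
    simp only [mul_left_comm _ (-(c * (b + 1))), mul_assoc ((a : ℝ) + 1),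
      intervalIntegral.integral_const_mul, ih (b + 1)] at hibp
    have hcb : -(c * (b + 1)) ≠ 0 := neg_ne_zero.2 (mul_ne_zero hc (by positivity))
    apply mul_left_cancel₀ hcb
    rw [hibp, show a + (b + 1) + 1 = a + 1 + b + 1 by ring, Nat.factorial_succ a,
      Nat.factorial_succ b]
    push_cast
    field_simp
    ring

theorem lintegral_Icc_pow_mul_sub_mul_pow (a b : ℕ) {t c : ℝ} (hc : 0 < c) (ht : 0 ≤ t) :
    ∫⁻ y in Set.Icc 0 (t / c), ENNReal.ofReal (y ^ a * (t - c * y) ^ b) =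
      ENNReal.ofReal (t ^ (a + b + 1) * a ! * b ! / ((a + b + 1)! * c ^ (a + 1))) := by
  have hnonneg : ∀ y ∈ Set.Icc 0 (t / c), 0 ≤ y ^ a * (t - c * y) ^ b := fun y hy =>
    mul_nonneg (pow_nonneg hy.1 a)
      (pow_nonneg (by linarith [(le_div_iff₀' hc).1 hy.2]) b)
  rw [← ofReal_integral_eq_lintegral_ofReal
      ((by fun_prop : Continuous fun y : ℝ => y ^ a * (t - c * y) ^ b).integrableOn_Icc)
      ((ae_restrict_iff' measurableSet_Icc).2 (ae_of_all _ hnonneg)),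
    integral_Icc_eq_integral_Ioc, ← intervalIntegral.integral_of_le (by positivity),
    integral_pow_mul_sub_mul_pow a b hc.ne']

section Simplex

variable {ι : Type*} [Fintype ι]

def weightedSimplex (w : ι → ℝ) (t : ℝ) : Set (ι → ℝ) :=
  {x | (∀ i, 0 ≤ x i) ∧ ∑ i, w i * x i ≤ t}

theorem measurableSet_weightedSimplex (w : ι → ℝ) (t : ℝ) :
    MeasurableSet (weightedSimplex w t) := by
  simp only [weightedSimplex, Set.ofPred_and, Set.ofPred_forall]
  exact (MeasurableSet.iInter fun i => measurableSet_le measurable_const (measurable_pi_apply i))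
    |>.inter (measurableSet_le (by fun_prop) measurable_const)

theorem weightedSimplex_eq_empty {w : ι → ℝ} (hw : ∀ i, 0 ≤ w i) {t : ℝ} (ht : t < 0) :
    weightedSimplex w t = ∅ :=
  Set.eq_empty_of_forall_notMem fun _ ⟨hx, hsum⟩ =>
    (sum_nonneg fun i _ => mul_nonneg (hw i) (hx i)).not_gt (hsum.trans_lt ht)

end Simplex

theorem cons_mem_weightedSimplex_iff {n : ℕ} {w : Fin (n + 1) → ℝ} {t y : ℝ} {x : Fin n → ℝ} :
    (Fin.cons y x : Fin (n + 1) → ℝ) ∈ weightedSimplex w t ↔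
      0 ≤ y ∧ x ∈ weightedSimplex (Fin.tail w) (t - w 0 * y) := by
  simp only [weightedSimplex, Set.mem_ofPred_eq, Fin.forall_fin_succ, Fin.cons_zero,
    Fin.cons_succ, Fin.sum_univ_succ, Fin.tail]
  constructor
  · rintro ⟨⟨hy, hx⟩, hsum⟩
    exact ⟨hy, hx, by linarith⟩
  · rintro ⟨hy, hx, hsum⟩
    exact ⟨⟨hy, hx⟩, by linarith⟩

theorem lintegral_eq_lintegral_lintegral_cons {n : ℕ} {E : Type*} [MeasureSpace E]
    [SigmaFinite (volume : Measure E)] {f : (Fin (n + 1) → E) → ℝ≥0∞} (hf : Measurable f) :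
    ∫⁻ x, f x = ∫⁻ y, ∫⁻ x, f (Fin.cons y x) := by
  have e := (volume_preserving_piFinSuccAbove (fun _ : Fin (n + 1) => E) 0).symm
  have hmeas := (hf.comp e.measurable).aemeasurable (μ := volume.prod volume)
  rw [← e.lintegral_comp_emb (MeasurableEquiv.measurableEmbedding _), Measure.volume_eq_prod]
  refine (lintegral_prod _ hmeas).trans ?_
  simp only [Function.comp_apply, MeasurableEquiv.piFinSuccAbove_symm_apply, Fin.insertNthEquiv,
    Equiv.coe_fn_mk, Fin.insertNth_zero']

theorem lintegral_indicator_weightedSimplex_cons {n : ℕ} (w : Fin (n + 1) → ℝ)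
    (α : Fin (n + 1) → ℕ) (t y : ℝ) :
    ∫⁻ x, (weightedSimplex w t).indicator (fun x => ENNReal.ofReal (∏ i, x i ^ α i))
        (Fin.cons y x) =
      (Set.Ici 0).indicator (fun y => ENNReal.ofReal (y ^ α 0)) y *
        ∫⁻ x in weightedSimplex (Fin.tail w) (t - w 0 * y),
          ENNReal.ofReal (∏ i, x i ^ Fin.tail α i) := by
  have hslice : ∀ x : Fin n → ℝ,
      (weightedSimplex w t).indicator (fun x => ENNReal.ofReal (∏ i, x i ^ α i)) (Fin.cons y x) =
        (Set.Ici 0).indicator (fun y => ENNReal.ofReal (y ^ α 0)) y *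
          (weightedSimplex (Fin.tail w) (t - w 0 * y)).indicator
            (fun x => ENNReal.ofReal (∏ i, x i ^ Fin.tail α i)) x := by
    intro x
    by_cases hy : 0 ≤ y
    · by_cases hx : x ∈ weightedSimplex (Fin.tail w) (t - w 0 * y)
      · simp [Set.indicator, cons_mem_weightedSimplex_iff, hy, hx, Fin.prod_univ_succ,
          ENNReal.ofReal_mul (pow_nonneg hy _), Fin.tail]
      · simp [Set.indicator, cons_mem_weightedSimplex_iff, hx]
    · simp [Set.indicator, cons_mem_weightedSimplex_iff, hy]
  simp_rw [hslice]
  rw [lintegral_const_mul _ ((by fun_prop : Measurable fun x : Fin n → ℝ =>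
      ENNReal.ofReal (∏ i, x i ^ Fin.tail α i)).indicator (measurableSet_weightedSimplex _ _)),
    lintegral_indicator (measurableSet_weightedSimplex _ _)]

noncomputable def simplexMomentCoeff {n : ℕ} (w : Fin n → ℝ) (α : Fin n → ℕ) : ℝ :=
  (∏ i, ((α i)! : ℝ)) / ((n + ∑ i, α i)! * ∏ i, w i ^ (α i + 1))

theorem simplexMomentCoeff_nonneg {n : ℕ} {w : Fin n → ℝ} (hw : ∀ i, 0 ≤ w i) (α : Fin n → ℕ) :
    0 ≤ simplexMomentCoeff w α :=
  div_nonneg (by positivity)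
    (mul_nonneg (by positivity) (prod_nonneg fun i _ => pow_nonneg (hw i) _))

theorem simplexMomentCoeff_succ {n : ℕ} {w : Fin (n + 1) → ℝ} (hw : w 0 ≠ 0)
    (α : Fin (n + 1) → ℕ) :
    simplexMomentCoeff w α =
      simplexMomentCoeff (Fin.tail w) (Fin.tail α) * ((α 0)! * (n + ∑ i, Fin.tail α i)! /
        ((α 0 + (n + ∑ i, Fin.tail α i) + 1)! * w 0 ^ (α 0 + 1))) := by
  have hdeg : α 0 + (n + ∑ i, Fin.tail α i) + 1 = n + 1 + ∑ i, α i := by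
    simp only [Fin.sum_univ_succ, Fin.tail]
    ring
  have hfact : ((n + ∑ i, Fin.tail α i)! : ℝ) ≠ 0 := by positivity
  unfold simplexMomentCoeff
  rw [hdeg]
  simp only [Fin.prod_univ_succ, Fin.tail]
  field_simp

theorem lintegral_weightedSimplex_monomial {n : ℕ} {w : Fin n → ℝ} (hw : ∀ i, 0 < w i)
    {t : ℝ} (ht : 0 ≤ t) (α : Fin n → ℕ) :
    ∫⁻ x in weightedSimplex w t, ENNReal.ofReal (∏ i, x i ^ α i) =
      ENNReal.ofReal (t ^ (n + ∑ i, α i) * simplexMomentCoeff w α) := by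
  induction n generalizing t with
  | zero =>
    have huniv : weightedSimplex w t = Set.univ :=
      Set.eq_univ_of_forall fun x => ⟨fun i => i.elim0, by simpa using ht⟩
    simp [huniv, volume_pi, simplexMomentCoeff]
  | succ n ih =>
    set N := n + ∑ i, Fin.tail α i
    set C := simplexMomentCoeff (Fin.tail w) (Fin.tail α)
    have hC_nonneg : 0 ≤ C := simplexMomentCoeff_nonneg (fun i => (hw i.succ).le) _
    have hinner : ∀ y, ∫⁻ x, (weightedSimplex w t).indicator
        (fun x => ENNReal.ofReal (∏ i, x i ^ α i)) (Fin.cons y x) =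
        (Set.Icc 0 (t / w 0)).indicator
          (fun y => ENNReal.ofReal C * ENNReal.ofReal (y ^ α 0 * (t - w 0 * y) ^ N)) y := by
      intro y
      rw [lintegral_indicator_weightedSimplex_cons]
      by_cases hy : 0 ≤ y
      · by_cases hyt : w 0 * y ≤ t
        · rw [ih (w := Fin.tail w) (fun i => hw i.succ) (by linarith),
            Set.indicator_of_mem (Set.mem_Ici.2 hy),
            Set.indicator_of_mem (Set.mem_Icc.2 ⟨hy, (le_div_iff₀' (hw 0)).2 hyt⟩),
            ← ENNReal.ofReal_mul (pow_nonneg hy _), ← ENNReal.ofReal_mul hC_nonneg]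
          congr 1
          ring
        · rw [weightedSimplex_eq_empty (w := Fin.tail w) (fun i => (hw i.succ).le) (by linarith),
            Measure.restrict_empty, lintegral_zero_measure, mul_zero,
            Set.indicator_of_notMem fun h => hyt ((le_div_iff₀' (hw 0)).1 h.2)]
      · rw [Set.indicator_of_notMem (mt Set.mem_Ici.1 hy), Set.indicator_of_notMem fun h => hy h.1,
          zero_mul]
    rw [← lintegral_indicator (measurableSet_weightedSimplex _ _),
      lintegral_eq_lintegral_lintegral_cons ((by fun_prop : Measurable fun x : Fin (n + 1) → ℝ =>
        ENNReal.ofReal (∏ i, x i ^ α i)).indicator (measurableSet_weightedSimplex _ _))]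
    simp_rw [hinner]
    rw [lintegral_indicator measurableSet_Icc, lintegral_const_mul' _ _ ENNReal.ofReal_ne_top,
      lintegral_Icc_pow_mul_sub_mul_pow _ _ (hw 0) ht, ← ENNReal.ofReal_mul hC_nonneg,
      simplexMomentCoeff_succ (hw 0).ne']
    have hdeg : n + 1 + ∑ i, α i = α 0 + N + 1 := by
      simp only [N, Fin.sum_univ_succ, Fin.tail]
      ring
    rw [hdeg]
    congr 1
    ring

theorem setIntegral_weightedSimplex_monomial {n : ℕ} {w : Fin n → ℝ} (hw : ∀ i, 0 < w i) {t : ℝ}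
    (ht : 0 ≤ t) (α : Fin n → ℕ) :
    ∫ x in weightedSimplex w t, ∏ i, x i ^ α i = t ^ (n + ∑ i, α i) * simplexMomentCoeff w α := by
  rw [integral_eq_lintegral_of_nonneg_ae
      ((ae_restrict_iff' (measurableSet_weightedSimplex w t)).2
        (ae_of_all _ fun x hx => prod_nonneg fun i _ => pow_nonneg (hx.1 i) _))
      (Continuous.aestronglyMeasurable (by fun_prop)),
    lintegral_weightedSimplex_monomial hw ht, ENNReal.toReal_ofReal]
  exact mul_nonneg (pow_nonneg ht _) (simplexMomentCoeff_nonneg (fun i => (hw i).le) α)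

theorem integral_monomial_over_simplex_general
    (n : ℕ) (hn : 0 < n) (w : Fin n → ℝ) (hw : ∀ i, 0 < w i) (z : ℝ)
    (K : Finset (Fin n)) (α : Fin n → ℕ) :
    (∫ x in {x : Fin n → ℝ | (∀ i, 0 ≤ x i) ∧ ∑ i, w i * x i ≤ z - ∑ i ∈ K, w i},
        ∏ i, x i ^ α i) =
      (max (z - ∑ i ∈ K, w i) 0) ^ (n + ∑ i, α i) * (∏ i, ((α i).factorial : ℝ)) /
        (((n + ∑ i, α i).factorial : ℝ) * ∏ i, w i ^ (α i + 1)) := by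
  change ∫ x in weightedSimplex w (z - ∑ i ∈ K, w i), _ = _
  rcases le_or_gt 0 (z - ∑ i ∈ K, w i) with ht | ht
  · rw [max_eq_left ht, setIntegral_weightedSimplex_monomial hw ht α, simplexMomentCoeff,
      mul_div_assoc]
  · rw [weightedSimplex_eq_empty (fun i => (hw i).le) ht, max_eq_right ht.le,
      zero_pow (by omega), Measure.restrict_empty, integral_zero_measure, zero_mul, zero_div]

/-- Exact integration of a monomial over the simplex `Δ_{w, z - w·1_K}^∅`:
`∫_{Δ} ∏ xᵢ^{αᵢ} dx
  = ((z - w·1_K)₊^{n+∑αᵢ} ∏ αᵢ!)/((n+∑αᵢ)! ∏ wᵢ^{αᵢ+1})`. -/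
theorem integral_monomial_over_simplex
    (n : ℕ) (hn : 0 < n) (w : Fin n → ℝ) (hw : ∀ i, 0 < w i) (z : ℝ)
    (K : Finset (Fin n)) (α : Fin n → ℕ) (hα : ∀ i, 0 < α i) :
    (∫ x in {x : Fin n → ℝ | (∀ i, 0 ≤ x i) ∧ ∑ i, w i * x i ≤ z - ∑ i ∈ K, w i},
        ∏ i, x i ^ α i) =
      (max (z - ∑ i ∈ K, w i) 0) ^ (n + ∑ i, α i) * (∏ i, ((α i).factorial : ℝ)) /
        (((n + ∑ i, α i).factorial : ℝ) * ∏ i, w i ^ (α i + 1)) :=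
  integral_monomial_over_simplex_general n hn w hw z K α
end

section
/- Let n be a positive integer and let k be an integer with 0 ≤ k ≤ n−1. Let Ξₖⁿ := {x ∈ Iⁿ : k ≤ Σ_{i=1}^n xᵢ ≤ k+1} be the slab of the unit hypercube between the hyperplanes Σᵢxᵢ = k and Σᵢxᵢ = k+1. Then vol_n(Ξₖⁿ) = A(n,k)/n!, where A(n,k) is the Eulerian number counting permutations of {1,…,n} with exactly k ascents. -/
/-!
Stanley's argument. Send `x ∈ Iⁿ` to the fractional parts `yᵢ = fract (x₁ + ⋯ + xᵢ)` of its
partial sums. For almost every `x` the `yᵢ` are distinct and nonzero; let `w` rank them in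
decreasing order. Then `w` has an ascent at `i`, i.e. `y_{i+1} < yᵢ`, exactly when adding
`x_{i+1}` crosses an integer, so `w` has `⌊∑ xᵢ⌋` ascents. On the cell of those `x` with a given
`w` the integer parts of the partial sums are fixed, so `x ↦ y` is affine with determinant `1`
onto the open simplex of points ranked by `w`; these `n!` simplices tile the cube up to a null
set and are congruent, so each has volume `1/n!`.
-/

open MeasureTheory Finset

/-- The Eulerian number `A(n,k)`: the number of permutations `σ` of `Fin n` having exactly
`k` ascents, i.e. exactly `k` positions `i` followed by a position `j` (so `j = i + 1`)
with `σ i < σ j`. -/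
def eulerianNumber (n k : ℕ) : ℕ :=
  ((Finset.univ : Finset (Equiv.Perm (Fin n))).filter (fun σ =>
    ((Finset.univ : Finset (Fin n)).filter
      (fun i : Fin n => ∃ j : Fin n, (j : ℕ) = (i : ℕ) + 1 ∧ σ i < σ j)).card = k)).card

open Function
open scoped ENNReal Nat

theorem Int.sub_mem_Ioo_zero_one_iff {R : Type*} [CommRing R] [LinearOrder R] [FloorRing R]
    [IsStrictOrderedRing R] {s t : R} :
    t - s ∈ Set.Ioo 0 1 ↔
      fract t ≠ fract s ∧ ⌊t⌋ = ⌊s⌋ + if fract t < fract s then 1 else 0 := by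
  have hts : t - s = (⌊t⌋ - ⌊s⌋ : R) + (fract t - fract s) := by
    linarith [floor_add_fract t, floor_add_fract s]
  have := fract_nonneg t
  have := fract_nonneg s
  have := fract_lt_one t
  have := fract_lt_one s
  constructor
  · rintro ⟨h0, h1⟩
    have hlo : ⌊s⌋ ≤ ⌊t⌋ := floor_le_floor (by linarith)
    have hhi : ⌊t⌋ < ⌊s⌋ + 2 := by
      rw [floor_lt]; push_cast; linarith [lt_floor_add_one s]
    obtain h | h : ⌊t⌋ = ⌊s⌋ ∨ ⌊t⌋ = ⌊s⌋ + 1 := by omega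
    · have hlt : fract s < fract t := by rw [h, sub_self, zero_add] at hts; linarith
      simp [h, hlt.ne', hlt.not_gt]
    · have hlt : fract t < fract s := by rw [h] at hts; push_cast at hts; linarith
      simp [h, hlt.ne, hlt]
  · rintro ⟨hne, h⟩
    rw [h] at hts
    push_cast at hts
    split_ifs at hts with hlt
    · constructor <;> linarith
    · have : fract s < fract t := lt_of_le_of_ne (not_lt.1 hlt) hne.symm
      constructor <;> linarith

theorem Int.mem_Ioo_of_mem_Icc_of_fract_add_ne {R : Type*} [Ring R] [LinearOrder R]
    [FloorRing R] [IsStrictOrderedRing R] {s t : R} (ht : t ∈ Set.Icc 0 1)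
    (h : fract (s + t) ≠ fract s) : t ∈ Set.Ioo 0 1 := by
  refine ⟨lt_of_le_of_ne ht.1 ?_, lt_of_le_of_ne ht.2 ?_⟩ <;> rintro rfl <;> simp at h

namespace MeasureTheory

variable {E : Type*} [NormedAddCommGroup E] [NormedSpace ℝ E] [MeasurableSpace E] [BorelSpace E]
  [FiniteDimensional ℝ E] (μ : Measure E) [μ.IsAddHaarMeasure]

theorem Measure.addHaar_setOf_linearMap_eq {f : E →ₗ[ℝ] ℝ} (hf : f ≠ 0) (q : ℝ) :
    μ {y | f y = q} = 0 := by
  obtain ⟨u, hu⟩ : ∃ u, f u ≠ 0 := by simpa [LinearMap.ext_iff] using hf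
  set v := (q / f u) • u
  have hv : f v = q := by simp [v, div_mul_cancel₀ _ hu]
  have : {y | f y = q} = (fun y => y + -v) ⁻¹' (LinearMap.ker f : Set E) := by
    ext y
    simp [hv, sub_eq_zero, ← sub_eq_add_neg]
  rw [this, measure_preimage_add_right]
  exact Measure.addHaar_submodule μ _ (mt LinearMap.ker_eq_top.1 hf)

theorem ae_forall_linearMap_ne_intCast {f : E →ₗ[ℝ] ℝ} (hf : f ≠ 0) :
    ∀ᵐ y ∂μ, ∀ q : ℤ, f y ≠ q :=
  ae_all_iff.2 fun q => measure_eq_zero_iff_ae_notMem.1 (Measure.addHaar_setOf_linearMap_eq μ hf q)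

theorem ae_fract_ne_zero_and_injective {ι : Type*} [Fintype ι] :
    ∀ᵐ y : ι → ℝ, (∀ i, Int.fract (y i) ≠ 0) ∧ Injective fun i => Int.fract (y i) := by
  classical
  let proj (i : ι) : (ι → ℝ) →ₗ[ℝ] ℝ := LinearMap.proj i
  have hproj (i : ι) : proj i ≠ 0 := fun h => by
    simpa [proj] using LinearMap.congr_fun h (fun _ => 1)
  have hdiff {i j : ι} (hij : i ≠ j) : proj i - proj j ≠ 0 := fun h => by
    simpa [proj, Pi.single_eq_of_ne (Ne.symm hij)] using LinearMap.congr_fun h (Pi.single i 1)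
  have h0 : ∀ᵐ y : ι → ℝ, ∀ i, Int.fract (y i) ≠ 0 := ae_all_iff.2 fun i =>
    (ae_forall_linearMap_ne_intCast volume (hproj i)).mono fun y hy h => by
      obtain ⟨q, hq⟩ := Int.fract_eq_zero_iff.1 h
      exact hy q hq.symm
  have hinj : ∀ᵐ y : ι → ℝ, ∀ i j, i ≠ j → Int.fract (y i) ≠ Int.fract (y j) :=
    ae_all_iff.2 fun i => ae_all_iff.2 fun j => by
      by_cases hij : i = j
      · exact Filter.Eventually.of_forall fun _ h => (h hij).elim
      · exact (ae_forall_linearMap_ne_intCast volume (hdiff hij)).mono fun y hy _ h => by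
          obtain ⟨q, hq⟩ := Int.fract_eq_fract.1 h
          exact hy q hq
  filter_upwards [h0, hinj] with y hy0 hyinj
  exact ⟨hy0, fun i j h => by_contra fun hij => hyinj i j hij h⟩

end MeasureTheory

namespace EulerianSlab

variable {n : ℕ}

def orderSimplex (w : Equiv.Perm (Fin n)) : Set (Fin n → ℝ) :=
  Set.univ.pi (fun _ => Set.Ioo 0 1) ∩ {z | StrictAnti (z ∘ w.symm)}

theorem measurableSet_orderSimplex (w : Equiv.Perm (Fin n)) :
    MeasurableSet (orderSimplex w) := by
  refine (MeasurableSet.univ_pi fun _ => measurableSet_Ioo).inter ?_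
  simp only [StrictAnti, Set.ofPred_forall]
  exact .iInter fun a => .iInter fun b => .iInter fun _ =>
    measurableSet_lt (measurable_pi_apply _) (measurable_pi_apply _)

theorem lt_iff_of_mem_orderSimplex {w : Equiv.Perm (Fin n)} {z : Fin n → ℝ}
    (hz : z ∈ orderSimplex w) {i j : Fin n} : z i < z j ↔ w j < w i := by
  simpa using hz.2.lt_iff_gt (a := w i) (b := w j)

theorem injective_of_mem_orderSimplex {w : Equiv.Perm (Fin n)} {z : Fin n → ℝ}
    (hz : z ∈ orderSimplex w) : Injective z := by
  simpa [comp_def] using hz.2.injective.comp w.injective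

theorem pairwise_disjoint_orderSimplex : Pairwise (Disjoint on @orderSimplex n) := by
  intro w w' hne
  refine Set.disjoint_left.2 fun z hz hz' => hne ?_
  have hmono : StrictMono (w' ∘ w.symm) := fun a b hab => by
    simpa [lt_iff_of_mem_orderSimplex hz'] using (hz.2 hab)
  exact Equiv.ext fun i => by simpa using (congrFun hmono.eq_id (w i)).symm

theorem exists_mem_orderSimplex {z : Fin n → ℝ} (hz : ∀ i, z i ∈ Set.Ioo 0 1)
    (hinj : Injective z) : ∃ w, z ∈ orderSimplex w := by
  set σ := Tuple.sort (-z)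
  have hσ : StrictAnti (z ∘ σ) := by
    have := (Tuple.monotone_sort (-z)).strictMono_of_injective
      ((neg_injective.comp hinj).comp σ.injective)
    simpa [comp_def] using this.neg
  exact ⟨σ.symm, fun i _ => hz i, by simpa using hσ⟩

theorem volume_orderSimplex_eq_volume_orderSimplex_one (w : Equiv.Perm (Fin n)) :
    volume (orderSimplex w) = volume (orderSimplex (1 : Equiv.Perm (Fin n))) := by
  let e := MeasurableEquiv.arrowCongr' w (MeasurableEquiv.refl ℝ)
  have hpre : orderSimplex w = e ⁻¹' orderSimplex 1 := by
    ext z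
    exact and_congr (Set.mem_univ_pi.trans (w.forall_congr_left.trans Set.mem_univ_pi.symm))
      Iff.rfl
  rw [hpre, (volume_preserving_arrowCongr' w _ (.id volume)).measure_preimage
    (measurableSet_orderSimplex 1).nullMeasurableSet]

theorem volume_orderSimplex (w : Equiv.Perm (Fin n)) :
    volume (orderSimplex w) = (n ! : ℝ≥0∞)⁻¹ := by
  have hcube : volume (⋃ w : Equiv.Perm (Fin n), orderSimplex w) = 1 := by
    apply le_antisymm
    · calc volume (⋃ w, orderSimplex w)
          ≤ volume (Set.univ.pi fun _ : Fin n => Set.Ioo (0 : ℝ) 1) :=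
            measure_mono (Set.iUnion_subset fun _ => Set.inter_subset_left)
        _ = 1 := by simp [volume_pi_pi]
    · calc (1 : ℝ≥0∞) = volume (Set.univ.pi fun _ : Fin n => Set.Ioo (0 : ℝ) 1) := by
            simp [volume_pi_pi]
        _ ≤ _ := measure_mono_ae <| ae_fract_ne_zero_and_injective.mono fun z hz hzc => by
          have hfract : (fun i => Int.fract (z i)) = z :=
            funext fun i => Int.fract_eq_self.2 ⟨(hzc i trivial).1.le, (hzc i trivial).2⟩
          rw [hfract] at hz
          obtain ⟨w, hw⟩ := exists_mem_orderSimplex (fun i => hzc i trivial) hz.2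
          exact Set.mem_iUnion.2 ⟨w, hw⟩
  rw [measure_iUnion pairwise_disjoint_orderSimplex measurableSet_orderSimplex,
    tsum_fintype] at hcube
  simp only [volume_orderSimplex_eq_volume_orderSimplex_one, sum_const, card_univ,
    Fintype.card_perm, Fintype.card_fin, nsmul_eq_mul] at hcube
  rw [volume_orderSimplex_eq_volume_orderSimplex_one]
  exact ENNReal.eq_inv_of_mul_eq_one_left (by rwa [mul_comm])

def ascents (w : Equiv.Perm (Fin n)) : Finset (Fin n) :=
  {i | ∃ j : Fin n, (j : ℕ) = i + 1 ∧ w i < w j}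

theorem eulerianNumber_eq_card_ascents (k : ℕ) :
    eulerianNumber n k = #{w : Equiv.Perm (Fin n) | #(ascents w) = k} :=
  rfl

def ascentCount (w : Equiv.Perm (Fin n)) (i : Fin n) : ℕ :=
  #{a ∈ ascents w | a < i}

theorem castSucc_mem_ascents {w : Equiv.Perm (Fin (n + 1))} {i : Fin n} :
    i.castSucc ∈ ascents w ↔ w i.castSucc < w i.succ := by
  simp only [ascents, mem_filter, mem_univ, true_and]
  constructor
  · rintro ⟨j, hj, h⟩
    rwa [show j = i.succ from Fin.ext (by simpa using hj)] at h
  · exact fun h => ⟨i.succ, by simp, h⟩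

theorem last_notMem_ascents (w : Equiv.Perm (Fin (n + 1))) : Fin.last n ∉ ascents w := by
  simp only [ascents, mem_filter, mem_univ, true_and, not_exists, not_and]
  intro j hj
  have := j.isLt
  simp only [Fin.val_last] at hj
  omega

theorem ascentCount_zero (w : Equiv.Perm (Fin (n + 1))) : ascentCount w 0 = 0 := by
  simp [ascentCount]

theorem ascentCount_succ (w : Equiv.Perm (Fin (n + 1))) (i : Fin n) :
    ascentCount w i.succ =
      ascentCount w i.castSucc + if w i.castSucc < w i.succ then 1 else 0 := by
  simp_rw [ascentCount, ← Fin.le_castSucc_iff, le_iff_lt_or_eq, filter_or, filter_eq',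
    ← castSucc_mem_ascents]
  split_ifs with h
  · rw [card_union_of_disjoint (by simp), card_singleton]
  · simp

theorem ascentCount_last (w : Equiv.Perm (Fin (n + 1))) :
    ascentCount w (Fin.last n) = #(ascents w) := by
  rw [ascentCount, filter_true_of_mem]
  intro a ha
  exact lt_of_le_of_ne (Fin.le_last a) (by rintro rfl; exact last_notMem_ascents w ha)

def prefixSum : (Fin n → ℝ) →ₗ[ℝ] Fin n → ℝ :=
  Matrix.toLin' (Matrix.of fun i j => if j ≤ i then 1 else 0)

theorem prefixSum_apply (x : Fin n → ℝ) (i : Fin n) : prefixSum x i = ∑ j ∈ Iic i, x j := by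
  simp [prefixSum, Matrix.mulVec, dotProduct, ← sum_filter, filter_ge_eq_Iic]

theorem det_prefixSum : LinearMap.det (prefixSum : (Fin n → ℝ) →ₗ[ℝ] Fin n → ℝ) = 1 := by
  rw [prefixSum, LinearMap.det_toLin', Matrix.det_of_isLowerTriangular]
  · simp
  · intro i j (hij : i < j)
    simp [not_le.2 hij]

theorem prefixSum_zero (x : Fin (n + 1) → ℝ) : prefixSum x 0 = x 0 := by
  simp [prefixSum_apply, ← bot_eq_zero]

theorem prefixSum_succ (x : Fin (n + 1) → ℝ) (i : Fin n) :
    prefixSum x i.succ = prefixSum x i.castSucc + x i.succ := by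
  have hIio : Iio i.succ = Iic i.castSucc := by ext a; simp [Fin.le_castSucc_iff]
  rw [prefixSum_apply, prefixSum_apply, ← Iio_insert, sum_insert (by simp), hIio, add_comm]

theorem prefixSum_last (x : Fin (n + 1) → ℝ) : prefixSum x (Fin.last n) = ∑ i, x i := by
  simp [prefixSum_apply, ← Fin.top_eq_last]

def slabCell (w : Equiv.Perm (Fin n)) : Set (Fin n → ℝ) :=
  {x | prefixSum x - (fun i => (ascentCount w i : ℝ)) ∈ orderSimplex w}

theorem measurableSet_slabCell (w : Equiv.Perm (Fin n)) : MeasurableSet (slabCell w) :=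
  (measurableSet_orderSimplex w).preimage <|
    (LinearMap.continuous_of_finiteDimensional _).measurable.sub_const _

theorem volume_slabCell (w : Equiv.Perm (Fin n)) :
    volume (slabCell w) = volume (orderSimplex w) := by
  have hpre : slabCell w = prefixSum ⁻¹'
      ((fun y => y + -fun i => (ascentCount w i : ℝ)) ⁻¹' orderSimplex w) := by
    simp only [slabCell, ← sub_eq_add_neg]; rfl
  rw [hpre, Measure.addHaar_preimage_linearMap _ (by simp [det_prefixSum]), det_prefixSum,
    measure_preimage_add_right]
  simp

theorem mem_slabCell_iff {w : Equiv.Perm (Fin n)} {x : Fin n → ℝ} :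
    x ∈ slabCell w ↔ (∀ i, ⌊prefixSum x i⌋ = ascentCount w i) ∧
      (fun i => Int.fract (prefixSum x i)) ∈ orderSimplex w := by
  have hfract (h : ∀ i, ⌊prefixSum x i⌋ = ascentCount w i) :
      prefixSum x - (fun i => (ascentCount w i : ℝ)) = fun i => Int.fract (prefixSum x i) :=
    funext fun i => by simp [Int.fract, h i]
  refine ⟨fun hx => ?_, fun ⟨h, hx⟩ => by rwa [slabCell, Set.mem_ofPred_eq, hfract h]⟩
  have h (i : Fin n) : ⌊prefixSum x i⌋ = ascentCount w i := by
    obtain ⟨h0, h1⟩ : prefixSum x i - ascentCount w i ∈ Set.Ioo (0 : ℝ) 1 := hx.1 i trivial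
    rw [Int.floor_eq_iff]
    constructor <;> push_cast <;> linarith
  exact ⟨h, by rwa [← hfract h]⟩

theorem pairwise_disjoint_slabCell : Pairwise (Disjoint on @slabCell n) := fun _ _ hne =>
  Set.disjoint_left.2 fun _ hx hx' =>
    Set.disjoint_left.1 (pairwise_disjoint_orderSimplex hne) (mem_slabCell_iff.1 hx).2
      (mem_slabCell_iff.1 hx').2

theorem forall_mem_Ioo_iff_floor_prefixSum_eq {w : Equiv.Perm (Fin (n + 1))}
    {x : Fin (n + 1) → ℝ} (hx : (fun i => Int.fract (prefixSum x i)) ∈ orderSimplex w) :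
    (∀ i, x i ∈ Set.Ioo 0 1) ↔ ∀ i, ⌊prefixSum x i⌋ = ascentCount w i := by
  have hzero : x 0 ∈ Set.Ioo 0 1 ↔ ⌊prefixSum x 0⌋ = ascentCount w 0 := by
    rw [← prefixSum_zero x, ← sub_zero (prefixSum x 0), Int.sub_mem_Ioo_zero_one_iff]
    simp only [sub_zero, Int.fract_zero, Int.floor_zero, ascentCount_zero, ne_eq,
      (hx.1 0 trivial).1.ne', if_neg (Int.fract_nonneg _).not_gt]
    simp
  have hsucc (i : Fin n) : x i.succ ∈ Set.Ioo 0 1 ↔ ⌊prefixSum x i.succ⌋ =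
      ⌊prefixSum x i.castSucc⌋ + if w i.castSucc < w i.succ then 1 else 0 := by
    rw [show x i.succ = prefixSum x i.succ - prefixSum x i.castSucc by simp [prefixSum_succ],
      Int.sub_mem_Ioo_zero_one_iff]
    simp only [lt_iff_of_mem_orderSimplex hx, ne_eq, (injective_of_mem_orderSimplex hx).eq_iff,
      Fin.castSucc_lt_succ.ne', not_false_eq_true, true_and]
  rw [Fin.forall_fin_succ, hzero]
  simp only [hsucc]
  constructor
  · rintro ⟨h0, hs⟩ i
    induction i using Fin.induction with
    | zero => exact h0
    | succ i ih => rw [hs, ih, ascentCount_succ]; push_cast; rfl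
  · intro h
    exact ⟨h 0, fun i => by rw [h, h, ascentCount_succ]; push_cast; rfl⟩

def slab (n k : ℕ) : Set (Fin n → ℝ) :=
  {x | x ∈ Set.Icc 0 1 ∧ (k : ℝ) ≤ ∑ i, x i ∧ ∑ i, x i ≤ (k : ℝ) + 1}

theorem slabCell_subset_slab (w : Equiv.Perm (Fin (n + 1))) :
    slabCell w ⊆ slab (n + 1) #(ascents w) := by
  intro x hx
  obtain ⟨hfloor, hfract⟩ := mem_slabCell_iff.1 hx
  have hIoo := (forall_mem_Ioo_iff_floor_prefixSum_eq hfract).2 hfloor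
  have hsum : ⌊∑ i, x i⌋ = #(ascents w) := by
    rw [← prefixSum_last, hfloor, ascentCount_last]
  rw [Int.floor_eq_iff] at hsum
  exact ⟨⟨fun i => (hIoo i).1.le, fun i => (hIoo i).2.le⟩, by exact_mod_cast hsum.1,
    by exact_mod_cast hsum.2.le⟩

theorem ae_exists_slabCell_of_mem_slab (k : ℕ) :
    ∀ᵐ x : Fin (n + 1) → ℝ, x ∈ slab (n + 1) k → ∃ w, #(ascents w) = k ∧ x ∈ slabCell w := by
  filter_upwards [(Measure.LinearMap.quasiMeasurePreserving volume prefixSum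
      (by simp [det_prefixSum])).ae ae_fract_ne_zero_and_injective]
    with x ⟨hne, hinj⟩ ⟨hcube, hk, hk1⟩
  obtain ⟨w, hw⟩ := exists_mem_orderSimplex
    (fun i => ⟨(Int.fract_nonneg _).lt_of_ne' (hne i), Int.fract_lt_one _⟩) hinj
  have hIoo : ∀ i, x i ∈ Set.Ioo 0 1 := by
    refine Fin.forall_fin_succ.2 ⟨?_, fun i => ?_⟩
    · refine Int.mem_Ioo_of_mem_Icc_of_fract_add_ne (s := 0) ⟨hcube.1 0, hcube.2 0⟩ ?_
      simpa [prefixSum_zero] using hne 0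
    · refine Int.mem_Ioo_of_mem_Icc_of_fract_add_ne (s := prefixSum x i.castSucc)
        ⟨hcube.1 _, hcube.2 _⟩ ?_
      rw [← prefixSum_succ]
      exact hinj.ne Fin.castSucc_lt_succ.ne'
  have hfloor := (forall_mem_Ioo_iff_floor_prefixSum_eq hw).1 hIoo
  refine ⟨w, ?_, mem_slabCell_iff.2 ⟨hfloor, hw⟩⟩
  have hsum : ⌊∑ i, x i⌋ = k := by
    refine Int.floor_eq_iff.2 ⟨by exact_mod_cast hk, lt_of_le_of_ne (by exact_mod_cast hk1) ?_⟩
    intro h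
    apply hne (Fin.last n)
    rw [prefixSum_last, h]
    exact_mod_cast Int.fract_intCast (k + 1 : ℤ)
  rwa [← prefixSum_last, hfloor, ascentCount_last, Nat.cast_inj] at hsum

end EulerianSlab

open EulerianSlab in
theorem volume_eulerian_slab_general
    (n : ℕ) (hn : 0 < n) (k : ℕ) :
    (volume {x : Fin n → ℝ |
        x ∈ Set.Icc 0 1 ∧ (k : ℝ) ≤ ∑ i, x i ∧ ∑ i, x i ≤ (k : ℝ) + 1}).toReal =
      (eulerianNumber n k : ℝ) / (n.factorial : ℝ) := by
  obtain ⟨n, rfl⟩ := Nat.exists_eq_add_one_of_ne_zero hn.ne'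
  let cells : Finset (Equiv.Perm (Fin (n + 1))) := {w | #(ascents w) = k}
  have hslab : volume (slab (n + 1) k) = volume (⋃ w ∈ cells, slabCell w) := by
    refine le_antisymm (measure_mono_ae ?_) (measure_mono ?_)
    · filter_upwards [ae_exists_slabCell_of_mem_slab k] with x hx hxk
      obtain ⟨w, hw, hxw⟩ := hx hxk
      exact Set.mem_biUnion (by simpa [cells] using hw) hxw
    · exact Set.iUnion₂_subset fun w hw => (mem_filter.1 hw).2 ▸ slabCell_subset_slab w
  rw [← slab, hslab, measure_biUnion_finset (pairwise_disjoint_slabCell.set_pairwise _)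
    (fun w _ => measurableSet_slabCell w)]
  simp [volume_slabCell, volume_orderSimplex, eulerianNumber_eq_card_ascents, cells,
    ENNReal.toReal_inv, div_eq_mul_inv]

/-- Laplace's result: the volume of the slab `Ξₖⁿ` of the unit hypercube between the
hyperplanes `∑ xᵢ = k` and `∑ xᵢ = k + 1` equals the Eulerian number `A(n,k)` divided
by `n!`. -/
theorem volume_eulerian_slab
    (n : ℕ) (hn : 0 < n) (k : ℕ) (hk : k ≤ n - 1) :
    (volume {x : Fin n → ℝ |
        x ∈ Set.Icc 0 1 ∧ (k : ℝ) ≤ ∑ i, x i ∧ ∑ i, x i ≤ (k : ℝ) + 1}).toReal =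
      (eulerianNumber n k : ℝ) / (n.factorial : ℝ) :=
  volume_eulerian_slab_general n hn k
end
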